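/- arXiv:2509.00922 — 7 statements merged into one kernel-verified Lean document; each statement's English description precedes it below -/
import Mathlib

section
/- Let f : ℝ² → ℝ² be a C² vector field compactly supported in 𝔻. Then T₀f(x) = 0 for all x ∈ ℝ² if and only if there exists a C² scalar function φ : ℝ² → ℝ compactly supported in 𝔻 such that f(x) = φ(x)·u(x) for all x. -/
open MeasureTheory

noncomputable section

/-- Euclidean dot product on `ℝ × ℝ`. -/
def dot (a b : ℝ × ℝ) : ℝ := a.1 * b.1 + a.2 * b.2

/-- Rotation by `π/2`: `w⊥ = (−w₂, w₁)`. -/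
def perp (w : ℝ × ℝ) : ℝ × ℝ := (-w.2, w.1)

/-- The open unit disc in `ℝ²`. -/
def disc : Set (ℝ × ℝ) := {p : ℝ × ℝ | p.1 ^ 2 + p.2 ^ 2 < 1}

/-- Transverse divergent beam transform `T₀f(x) = −∫₀^∞ u⊥(x)·f(x + t u(x)) dt`. -/
def T0 (u : ℝ × ℝ → ℝ × ℝ) (f : ℝ × ℝ → ℝ × ℝ) (x : ℝ × ℝ) : ℝ :=
  - ∫ t in Set.Ioi (0 : ℝ), dot (perp (u x)) (f (x + t • u x))

/-! If `T₀f` vanishes identically then, since `u` is constant along its own rays, `T₀f(x + s u(x))`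
is minus the integral of `g(t) = u(x)⊥ · f(x + t u(x))` over `(s, ∞)`. All these tails vanish, so
differentiating at `s = 0` gives `u⊥ · f = 0`, i.e. `f = φ u` with `φ = u · f`. Although `u` is
only `C¹`, `φ` is `C²`: differentiating `|u|² = 1` gives `u · Du = 0`, so `Du · f = φ (u · Du) = 0`
and `Dφ = u · Df` is `C¹`. Conversely, if `f = φ u` the integrand `φ · (u(x)⊥ · u(x))` of `T₀f(x)`
vanishes. -/

open Set Function

lemma eq_zero_of_forall_setIntegral_Ioi_eq_zero {E : Type*} [NormedAddCommGroup E]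
    [NormedSpace ℝ E] [CompleteSpace E] {g : ℝ → E} {a : ℝ} (hg : Continuous g)
    (hint : IntegrableOn g (Ioi a)) (h : ∀ s, a ≤ s → ∫ t in Ioi s, g t = 0) : g a = 0 := by
  have hprim : ∀ s ∈ Ici a, ∫ t in a..s, g t = 0 := fun s hs => by
    rw [← intervalIntegral.integral_Ioi_sub_Ioi hint hs, h a le_rfl, h s hs, sub_zero]
  have hderiv : HasDerivWithinAt (fun s => ∫ t in a..s, g t) (g a) (Ici a) a :=
    (hg.integral_hasStrictDerivAt a a).hasDerivAt.hasDerivWithinAt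
  have hconst : HasDerivWithinAt (fun s => ∫ t in a..s, g t) 0 (Ici a) a :=
    (hasDerivWithinAt_const a (Ici a) (0 : E)).congr hprim (hprim a self_mem_Ici)
  exact (uniqueDiffOn_Ici a a self_mem_Ici).eq_deriv _ hderiv hconst

lemma setIntegral_Ioi_zero_comp_const_add {E : Type*} [NormedAddCommGroup E] [NormedSpace ℝ E]
    (g : ℝ → E) (s : ℝ) : ∫ t in Ioi 0, g (s + t) = ∫ t in Ioi s, g t := by
  simpa [preimage_const_add_Ioi] using
    (measurePreserving_add_left volume s).setIntegral_preimage_emb (measurableEmbedding_addLeft s) g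
      (Ioi s)

lemma dot_comm (v w : ℝ × ℝ) : dot v w = dot w v := by
  simp only [dot]; ring

lemma dot_smul_right (c : ℝ) (v w : ℝ × ℝ) : dot v (c • w) = c * dot v w := by
  simp only [dot, Prod.smul_fst, Prod.smul_snd, smul_eq_mul]; ring

lemma dot_perp_self (v : ℝ × ℝ) : dot (perp v) v = 0 := by
  simp only [dot, perp]; ring

lemma eq_dot_smul_of_dot_perp_eq_zero {v w : ℝ × ℝ} (hv : dot v v = 1)
    (h : dot (perp v) w = 0) : w = dot v w • v := by
  simp only [dot, perp] at hv h
  ext <;> simp only [dot, Prod.smul_fst, Prod.smul_snd, smul_eq_mul]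
  · linear_combination (-w.1) * hv - v.2 * h
  · linear_combination (-w.2) * hv + v.1 * h

def dotL : ℝ × ℝ →L[ℝ] ℝ × ℝ →L[ℝ] ℝ :=
  (ContinuousLinearMap.mul ℝ ℝ).bilinearComp (.fst ℝ ℝ ℝ) (.fst ℝ ℝ ℝ) +
    (ContinuousLinearMap.mul ℝ ℝ).bilinearComp (.snd ℝ ℝ ℝ) (.snd ℝ ℝ ℝ)

@[simp] lemma dotL_apply (a b : ℝ × ℝ) : dotL a b = dot a b := rfl

section Derivatives

variable {E : Type*} [NormedAddCommGroup E] [NormedSpace ℝ E] {u f : E → ℝ × ℝ}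

lemma dot_fderiv_eq_zero_of_dot_self_eq_one (hu : Differentiable ℝ u)
    (hunit : ∀ x, dot (u x) (u x) = 1) (x h : E) : dot (u x) (fderiv ℝ u x h) = 0 := by
  have hB := dotL.hasFDerivAt_of_bilinear (hu x).hasFDerivAt (hu x).hasFDerivAt
  simp only [dotL_apply, hunit] at hB
  have := congrArg (· h) ((hasFDerivAt_const (1 : ℝ) x).unique hB)
  simp only [zero_apply, add_apply, ContinuousLinearMap.precompR_apply,
    ContinuousLinearMap.compL_apply, ContinuousLinearMap.precompL_apply,
    ContinuousLinearMap.comp_apply, dotL_apply, dot_comm (fderiv ℝ u x h)] at this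
  linarith

lemma hasFDerivAt_dot_of_eq_dot_smul (hu : Differentiable ℝ u) (hf : Differentiable ℝ f)
    (hunit : ∀ x, dot (u x) (u x) = 1) (hpar : ∀ x, f x = dot (u x) (f x) • u x) (x : E) :
    HasFDerivAt (fun y => dot (u y) (f y)) ((dotL (u x)).comp (fderiv ℝ f x)) x := by
  have hB := dotL.hasFDerivAt_of_bilinear (hu x).hasFDerivAt (hf x).hasFDerivAt
  simp only [dotL_apply] at hB
  refine hB.congr_fderiv (ContinuousLinearMap.ext fun h => ?_)
  have h0 := dot_fderiv_eq_zero_of_dot_self_eq_one hu hunit x h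
  simp only [add_apply, ContinuousLinearMap.precompR_apply, ContinuousLinearMap.compL_apply,
    ContinuousLinearMap.precompL_apply, ContinuousLinearMap.comp_apply, dotL_apply, add_eq_left]
  rw [hpar x, dot_smul_right, dot_comm _ (u x), h0, mul_zero]

lemma contDiff_dot_of_eq_dot_smul {n : ℕ∞} (hn : n ≠ 0) (hu : ContDiff ℝ n u)
    (hf : ContDiff ℝ (n + 1) f) (hunit : ∀ x, dot (u x) (u x) = 1)
    (hpar : ∀ x, f x = dot (u x) (f x) • u x) :
    ContDiff ℝ (n + 1) (fun x => dot (u x) (f x)) := by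
  have hderiv := hasFDerivAt_dot_of_eq_dot_smul (hu.differentiable (by exact_mod_cast hn))
    (hf.differentiable (by simp)) hunit hpar
  refine contDiff_succ_iff_fderiv.2 ⟨fun x => (hderiv x).differentiableAt, by simp, ?_⟩
  rw [funext fun x => (hderiv x).fderiv]
  exact (dotL.contDiff.comp hu).clm_comp (hf.fderiv_right le_rfl)

end Derivatives

lemma T0_add_smul {u : ℝ × ℝ → ℝ × ℝ}
    (hline : ∀ (x : ℝ × ℝ) (t : ℝ), 0 ≤ t → u (x + t • u x) = u x)
    (f : ℝ × ℝ → ℝ × ℝ) (x : ℝ × ℝ) {s : ℝ} (hs : 0 ≤ s) :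
    T0 u f (x + s • u x) = -∫ t in Ioi s, dot (perp (u x)) (f (x + t • u x)) := by
  rw [T0, hline x s hs, ← setIntegral_Ioi_zero_comp_const_add _ s]
  simp only [add_smul, add_assoc]

lemma dot_perp_eq_zero_of_forall_T0_eq_zero {u : ℝ × ℝ → ℝ × ℝ}
    (hline : ∀ (x : ℝ × ℝ) (t : ℝ), 0 ≤ t → u (x + t • u x) = u x) {f : ℝ × ℝ → ℝ × ℝ}
    (hf : Continuous f) (hcs : HasCompactSupport f) (hT : ∀ x, T0 u f x = 0) (x : ℝ × ℝ) :
    dot (perp (u x)) (f x) = 0 := by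
  rcases eq_or_ne (u x) 0 with hux | hux
  · simp [hux, perp, dot]
  set g : ℝ → ℝ := fun t => dot (perp (u x)) (f (x + t • u x))
  have hg_cont : Continuous g := by unfold g dot; fun_prop
  have hg_supp : HasCompactSupport g :=
    (hcs.comp_left (g := dot (perp (u x))) (by simp [dot])).comp_isClosedEmbedding
      ((Homeomorph.addLeft x).isClosedEmbedding.comp (isClosedEmbedding_smul_left hux))
  have := eq_zero_of_forall_setIntegral_Ioi_eq_zero (a := 0) hg_cont
    (hg_cont.integrable_of_hasCompactSupport hg_supp).integrableOn
    fun s hs => by simpa [T0_add_smul hline f x hs] using hT (x + s • u x)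
  simpa [g] using this

lemma T0_smul_eq_zero {u : ℝ × ℝ → ℝ × ℝ}
    (hline : ∀ (x : ℝ × ℝ) (t : ℝ), 0 ≤ t → u (x + t • u x) = u x) (φ : ℝ × ℝ → ℝ) (x : ℝ × ℝ) :
    T0 u (fun y => φ y • u y) x = 0 := by
  have hzero : EqOn (fun t : ℝ => dot (perp (u x)) (φ (x + t • u x) • u (x + t • u x))) 0
      (Ioi 0) := fun t ht => by
    simp only [hline x t (le_of_lt ht), dot_smul_right, dot_perp_self, mul_zero, Pi.zero_apply]
  simp [T0, setIntegral_congr_fun measurableSet_Ioi hzero]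

theorem stmt2
    (u : ℝ × ℝ → ℝ × ℝ) (hu : ContDiff ℝ 1 u)
    (hunit : ∀ x, dot (u x) (u x) = 1)
    (hline : ∀ (x : ℝ × ℝ) (t : ℝ), 0 ≤ t → u (x + t • u x) = u x)
    (f : ℝ × ℝ → ℝ × ℝ) (hf : ContDiff ℝ 2 f)
    (hcs : HasCompactSupport f) (hsupp : tsupport f ⊆ disc) :
    (∀ x, T0 u f x = 0) ↔
      ∃ φ : ℝ × ℝ → ℝ, ContDiff ℝ 2 φ ∧ HasCompactSupport φ ∧ tsupport φ ⊆ disc ∧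
        ∀ x, f x = φ x • u x := by
  constructor
  · intro hT
    have hpar (x : ℝ × ℝ) : f x = dot (u x) (f x) • u x := eq_dot_smul_of_dot_perp_eq_zero (hunit x)
      (dot_perp_eq_zero_of_forall_T0_eq_zero hline hf.continuous hcs hT x)
    have hsub : support (fun x => dot (u x) (f x)) ⊆ support f :=
      support_subset_iff'.2 fun x hx => by simp [notMem_support.1 hx, dot]
    exact ⟨_, contDiff_dot_of_eq_dot_smul one_ne_zero hu hf hunit hpar, hcs.mono hsub,
      (closure_mono hsub).trans hsupp, hpar⟩
  · rintro ⟨φ, -, -, -, hφ⟩ x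
    rw [funext hφ]
    exact T0_smul_eq_zero hline φ x
end
end

section
/- Let f : ℝ² → ℝ² be a C² vector field compactly supported in 𝔻. Then for all x ∈ ℝ²: (1) D_u(L₀f)(x) = u(x)·f(x); (2) D_u(T₀f)(x) = u⊥(x)·f(x); and (3) f(x) = (D_u L₀f)(x)·u(x) + (D_u T₀f)(x)·u⊥(x). In particular f is uniquely and explicitly determined by the pair (L₀f, T₀f). -/
/-!
A `C¹` unit field whose forward rays are straight lines is in fact constant along whole lines:
backwards along the ray, the defect `u (x - r • u x) - u x` solves a linear ODE with zero
initial value, so it vanishes by Grönwall. Hence moving the base point `x` along `u x` only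
shifts the ray integrals defining `L0 f` and `T0 f`, so `D_u` of them is the derivative of a
tail integral `s ↦ -∫_s^∞ g`, which is `g 0` by the fundamental theorem of calculus. Part (3)
is the expansion of `f x` in the orthonormal frame `(u x, (u x)⊥)`.
-/

open MeasureTheory

noncomputable section

/-- Directional derivative `D_u F (x)`: derivative at `s = 0` of `s ↦ F (x + s • u x)`. -/
def DirD (u : ℝ × ℝ → ℝ × ℝ) (F : ℝ × ℝ → ℝ) (x : ℝ × ℝ) : ℝ :=
  deriv (fun s : ℝ => F (x + s • u x)) 0

/-- Longitudinal divergent beam transform. -/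
def L0 (u : ℝ × ℝ → ℝ × ℝ) (f : ℝ × ℝ → ℝ × ℝ) (x : ℝ × ℝ) : ℝ :=
  - ∫ t in Set.Ioi (0 : ℝ), dot (u x) (f (x + t • u x))

open Set

section StraightLines

variable {E : Type*} [NormedAddCommGroup E] [NormedSpace ℝ E] {u : E → E}

theorem fderiv_apply_self_eq_zero (hu : Differentiable ℝ u)
    (hline : ∀ (x : E) (t : ℝ), 0 ≤ t → u (x + t • u x) = u x) (x : E) :
    fderiv ℝ u x (u x) = 0 := by
  have hray : HasDerivAt (fun s : ℝ => x + s • u x) (u x) 0 := by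
    simpa using ((hasDerivAt_id (0 : ℝ)).smul_const (u x)).const_add x
  have hderiv : HasDerivAt (fun s : ℝ => u (x + s • u x)) (fderiv ℝ u x (u x)) 0 := by
    simpa [Function.comp_def] using (hu (x + (0 : ℝ) • u x)).hasFDerivAt.comp_hasDerivAt 0 hray
  have hconst : HasDerivWithinAt (fun s : ℝ => u (x + s • u x)) 0 (Ici 0) 0 :=
    (hasDerivWithinAt_const _ _ (u x)).congr (fun t ht => hline x t ht) (by simp)
  exact (uniqueDiffOn_Ici 0 0 self_mem_Ici).eq_deriv _ hderiv.hasDerivWithinAt hconst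

theorem apply_add_smul_self_eq (hu : ContDiff ℝ 1 u)
    (hline : ∀ (x : E) (t : ℝ), 0 ≤ t → u (x + t • u x) = u x) (x : E) (s : ℝ) :
    u (x + s • u x) = u x := by
  rcases le_or_gt 0 s with hs | hs
  · exact hline x s hs
  set γ : ℝ → E := fun r => x - r • u x
  set F : ℝ → E := fun r => u (γ r) - u x
  have hγ : Continuous γ := by fun_prop
  obtain ⟨K, hK⟩ : ∃ K, ∀ r ∈ Icc 0 (-s), ‖fderiv ℝ u (γ r)‖ ≤ K :=
    isCompact_Icc.exists_bound_of_continuousOn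
      ((hu.continuous_fderiv one_ne_zero).comp hγ).continuousOn
  have hF : ∀ r, HasDerivAt F (fderiv ℝ u (γ r) (F r)) r := by
    intro r
    have hγ' : HasDerivAt γ (-u x) r := by
      simpa using ((hasDerivAt_id r).smul_const (u x)).const_sub x
    have hFr : fderiv ℝ u (γ r) (F r) = fderiv ℝ u (γ r) (-u x) := by
      rw [show F r = u (γ r) + -u x by simp [F, sub_eq_add_neg], map_add,
        fderiv_apply_self_eq_zero (hu.differentiable one_ne_zero) hline, zero_add]
    rw [hFr]
    exact ((hu.differentiable one_ne_zero (γ r)).hasFDerivAt.comp_hasDerivAt r hγ').sub_const _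
  have hF0 := eq_zero_of_abs_deriv_le_mul_abs_self_of_eq_zero_right (K := K) (a := 0) (b := -s)
    (hu.continuous.comp hγ |>.sub continuous_const).continuousOn
    (fun r _ => (hF r).hasDerivWithinAt) (by simp [γ])
    (fun r hr => (ContinuousLinearMap.le_opNorm _ _).trans
      (mul_le_mul_of_nonneg_right (hK r (Ico_subset_Icc_self hr)) (norm_nonneg _)))
    (-s) (right_mem_Icc.2 (by linarith))
  simpa [F, γ, sub_eq_zero] using hF0

end StraightLines

section TailIntegral

variable {E : Type*} [NormedAddCommGroup E] [NormedSpace ℝ E]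

theorem setIntegral_Ioi_zero_comp_add_left (g : ℝ → E) (s : ℝ) :
    ∫ t in Ioi (0 : ℝ), g (s + t) = ∫ t in Ioi s, g t := by
  have h := (measurePreserving_add_left volume s).setIntegral_preimage_emb
    (measurableEmbedding_addLeft s) g (Ioi s)
  rwa [show (s + ·) ⁻¹' Ioi s = Ioi 0 by ext; simp] at h

theorem hasDerivAt_setIntegral_Ioi [CompleteSpace E] {g : ℝ → E} {a : ℝ} (hg : Integrable g)
    (hga : ContinuousAt g a) :
    HasDerivAt (fun s => ∫ t in Ioi s, g t) (-g a) a := by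
  have hsplit : (fun s => ∫ t in Ioi s, g t)
      = fun s => (∫ t in Ioi a, g t) - ∫ t in a..s, g t := by
    funext s
    rw [← intervalIntegral.integral_Ioi_sub_Ioi' hg.integrableOn hg.integrableOn, sub_sub_cancel]
  rw [hsplit]
  exact (intervalIntegral.integral_hasDerivAt_right hg.intervalIntegrable
    hg.aestronglyMeasurable.stronglyMeasurableAtFilter hga).const_sub _

end TailIntegral

theorem HasCompactSupport.comp_add_smul {E F : Type*} [NormedAddCommGroup E] [NormedSpace ℝ E]
    [Zero F] {f : E → F} (hf : HasCompactSupport f) (x : E) {v : E} (hv : v ≠ 0) :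
    HasCompactSupport fun t : ℝ => f (x + t • v) :=
  hf.comp_isClosedEmbedding ((Homeomorph.addLeft x).isClosedEmbedding.comp
    (isClosedEmbedding_smul_left hv))

theorem dirD_neg_integral_Ioi_dot {u : ℝ × ℝ → ℝ × ℝ} (hu : ContDiff ℝ 1 u)
    (hline : ∀ (x : ℝ × ℝ) (t : ℝ), 0 ≤ t → u (x + t • u x) = u x)
    {f : ℝ × ℝ → ℝ × ℝ} (hf : Continuous f) (hcs : HasCompactSupport f)
    (w : ℝ × ℝ → ℝ × ℝ) {x : ℝ × ℝ} (hux : u x ≠ 0) :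
    DirD u (fun y => -∫ t in Ioi (0 : ℝ), dot (w (u y)) (f (y + t • u y))) x =
      dot (w (u x)) (f x) := by
  set g : ℝ → ℝ := fun t => dot (w (u x)) (f (x + t • u x))
  have hg : Continuous g := by unfold g dot; fun_prop
  have hgcs : HasCompactSupport g :=
    (hcs.comp_add_smul x hux).comp_left (g := dot (w (u x))) (by simp [dot])
  have hshift : ∀ s : ℝ,
      -∫ t in Ioi (0 : ℝ), dot (w (u (x + s • u x))) (f (x + s • u x + t • u (x + s • u x))) =
        -∫ t in Ioi s, g t := by
    intro s
    rw [apply_add_smul_self_eq hu hline, ← setIntegral_Ioi_zero_comp_add_left g s]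
    simp only [g, add_smul, add_assoc]
  simp only [DirD, hshift]
  simpa [g] using (hasDerivAt_setIntegral_Ioi (a := 0)
    (hg.integrable_of_hasCompactSupport hgcs) hg.continuousAt).neg.deriv

theorem eq_dot_smul_add_dot_perp_smul {w : ℝ × ℝ} (hw : dot w w = 1) (p : ℝ × ℝ) :
    p = dot w p • w + dot (perp w) p • perp w := by
  simp only [dot, perp] at hw ⊢
  ext <;> simp <;> linear_combination (-_) * hw

theorem stmt3_general
    (u : ℝ × ℝ → ℝ × ℝ) (hu : ContDiff ℝ 1 u)
    (hunit : ∀ x, dot (u x) (u x) = 1)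
    (hline : ∀ (x : ℝ × ℝ) (t : ℝ), 0 ≤ t → u (x + t • u x) = u x)
    (f : ℝ × ℝ → ℝ × ℝ) (hf : ContDiff ℝ 2 f)
    (hcs : HasCompactSupport f) :
    (∀ x, DirD u (L0 u f) x = dot (u x) (f x)) ∧
    (∀ x, DirD u (T0 u f) x = dot (perp (u x)) (f x)) ∧
    (∀ x, f x = (DirD u (L0 u f) x) • u x + (DirD u (T0 u f) x) • perp (u x)) := by
  have hux : ∀ x, u x ≠ 0 := fun x h => by simpa [h, dot] using hunit x
  have hL : ∀ x, DirD u (L0 u f) x = dot (u x) (f x) := fun x =>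
    dirD_neg_integral_Ioi_dot hu hline hf.continuous hcs id (hux x)
  have hT : ∀ x, DirD u (T0 u f) x = dot (perp (u x)) (f x) := fun x =>
    dirD_neg_integral_Ioi_dot hu hline hf.continuous hcs perp (hux x)
  refine ⟨hL, hT, fun x => ?_⟩
  rw [hL, hT]
  exact eq_dot_smul_add_dot_perp_smul (hunit x) (f x)

theorem stmt3
    (u : ℝ × ℝ → ℝ × ℝ) (hu : ContDiff ℝ 1 u)
    (hunit : ∀ x, dot (u x) (u x) = 1)
    (hline : ∀ (x : ℝ × ℝ) (t : ℝ), 0 ≤ t → u (x + t • u x) = u x)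
    (f : ℝ × ℝ → ℝ × ℝ) (hf : ContDiff ℝ 2 f)
    (hcs : HasCompactSupport f) (hsupp : tsupport f ⊆ disc) :
    (∀ x, DirD u (L0 u f) x = dot (u x) (f x)) ∧
    (∀ x, DirD u (T0 u f) x = dot (perp (u x)) (f x)) ∧
    (∀ x, f x = (DirD u (L0 u f) x) • u x + (DirD u (T0 u f) x) • perp (u x)) :=
  stmt3_general u hu hunit hline f hf hcs
end
end

section
/- Let f : ℝ² → ℝ² be a C² vector field compactly supported in 𝔻. Then T₁f(x) = 0 for all x ∈ ℝ² if and only if there exists a C³ scalar function φ : ℝ² → ℝ supported in 𝔻 such that f = ∇⊥φ = (−∂φ/∂x₂, ∂φ/∂x₁). -/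
open MeasureTheory

noncomputable section

/-- Perpendicular gradient `∇⊥φ = (−∂φ/∂x₂, ∂φ/∂x₁)`. -/
def pgrad (φ : ℝ × ℝ → ℝ) (x : ℝ × ℝ) : ℝ × ℝ :=
  (-(fderiv ℝ φ x (0, 1)), fderiv ℝ φ x (1, 0))

/-- Transverse V-line transform with weight `α = 1`. -/
def T1 (u v : ℝ × ℝ → ℝ × ℝ) (f : ℝ × ℝ → ℝ × ℝ) (x : ℝ × ℝ) : ℝ :=
  (- ∫ t in Set.Ioi (0 : ℝ), dot (perp (u x)) (f (x + t • u x))) +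
    ∫ t in Set.Ioi (0 : ℝ), dot (perp (v x)) (f (x + t • v x))

/-!
For a unit field `w` whose integral curves are rays put
`Φ_w f x = -∫₀^∞ w(x)⊥ · f(x + t w(x)) dt`, so that `T₁ f = Φ_u f - Φ_v f`. Since the ray from
`x + s w(x)` is the tail of the ray from `x`, `s ↦ Φ_w f (x + s w(x))` is an antiderivative of the
integrand and the derivative of `Φ_w f` in the direction `w(x)` is `w(x)⊥ · f(x)`.
If `T₁ f = 0`, then `Φ_u f = Φ_v f` has the derivative `h ↦ h⊥ · f(x)` in the two independent
directions `u(x)`, `v(x)`, that is `∇⊥ Φ_u f = f`; this potential is locally constant off `supp f`,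
vanishes far out on a ray, and the exterior of a disc is connected, so it is supported in `𝔻`.
Conversely, if `f = ∇⊥ φ` then the integrand is `d/dt φ(x + t w(x))`, so `Φ_u f = φ = Φ_v f`.
-/

open Set Filter Topology

namespace VLineTransform

lemma integrableOn_Ioi_of_eq_zero {E : Type*} [NormedAddCommGroup E] {g : ℝ → E}
    (hg : Continuous g) {R : ℝ} (hR : ∀ t, R ≤ t → g t = 0) (a : ℝ) :
    IntegrableOn g (Ioi a) := by
  have hzero : IntegrableOn g (Ioi R) :=
    integrableOn_zero.congr_fun (fun t ht => (hR t (le_of_lt ht)).symm) measurableSet_Ioi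
  refine ((hg.integrableOn_Ioc (a := a) (b := R)).union hzero).mono_set fun t ht => ?_
  rcases le_or_gt t R with h | h
  · exact Or.inl ⟨ht, h⟩
  · exact Or.inr h

lemma setIntegral_Ioi_comp_const_add {E : Type*} [NormedAddCommGroup E] [NormedSpace ℝ E]
    (g : ℝ → E) (s : ℝ) : ∫ t in Ioi 0, g (s + t) = ∫ t in Ioi s, g t := by
  have := (measurePreserving_add_left volume s).setIntegral_preimage_emb
    (measurableEmbedding_addLeft s) g (Ioi s)
  rwa [preimage_const_add_Ioi, sub_self] at this

theorem differentiableAt_integral_Ioi_of_contDiff {E F : Type*} [NormedAddCommGroup E]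
    [NormedSpace ℝ E] [ProperSpace E] [NormedAddCommGroup F] [NormedSpace ℝ F]
    {G : E × ℝ → F} (hG : ContDiff ℝ 1 G) {x₀ : E} {a R : ℝ}
    (hR : ∀ x ∈ Metric.ball x₀ 1, ∀ t, R ≤ t → G (x, t) = 0) :
    DifferentiableAt ℝ (fun x => ∫ t in Ioi a, G (x, t)) x₀ := by
  set G' : E → ℝ → E →L[ℝ] F := fun x t => fderiv ℝ G (x, t) ∘L ContinuousLinearMap.inl ℝ E ℝ
  have hG'cont : Continuous fun p : E × ℝ => G' p.1 p.2 :=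
    (hG.continuous_fderiv one_ne_zero).clm_comp continuous_const
  have hG'zero : ∀ x ∈ Metric.ball x₀ 1, ∀ t, R < t → G' x t = 0 := by
    intro x hx t ht
    have hloc : G =ᶠ[𝓝 (x, t)] fun _ => 0 := by
      filter_upwards [(Metric.isOpen_ball.prod isOpen_Ioi).mem_nhds (mk_mem_prod hx ht)] with p hp
      exact hR p.1 hp.1 p.2 hp.2.le
    simp [G', hloc.fderiv_eq]
  obtain ⟨C, hC⟩ := ((isCompact_closedBall x₀ 1).prod (isCompact_Icc (a := a) (b := R))
    ).exists_bound_of_continuousOn hG'cont.continuousOn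
  have hbound : ∀ t ∈ Ioi a, ∀ x ∈ Metric.ball x₀ 1,
      ‖G' x t‖ ≤ (Icc a R).indicator (fun _ => C) t := by
    intro t ht x hx
    rcases le_or_gt t R with htR | htR
    · rw [indicator_of_mem (mem_Icc.mpr ⟨le_of_lt ht, htR⟩)]
      exact hC (x, t) (mk_mem_prod (Metric.ball_subset_closedBall hx) ⟨le_of_lt ht, htR⟩)
    · rw [hG'zero x hx t htR, indicator_of_notMem fun h => htR.not_ge h.2, norm_zero]
  have hG'x : ∀ x t, HasFDerivAt (fun y => G (y, t)) (G' x t) x := fun x t =>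
    (hG.differentiable one_ne_zero (x, t)).hasFDerivAt.comp x (hasFDerivAt_prodMk_left x t)
  exact (hasFDerivAt_integral_of_dominated_of_fderiv_le (Metric.ball_mem_nhds x₀ one_pos)
    (Eventually.of_forall fun x =>
      (hG.continuous.comp (Continuous.prodMk_right x)).aestronglyMeasurable)
    (integrableOn_Ioi_of_eq_zero (hG.continuous.comp (Continuous.prodMk_right x₀))
      (hR x₀ (Metric.mem_ball_self one_pos)) a)
    (hG'cont.comp (Continuous.prodMk_right x₀)).aestronglyMeasurable
    ((ae_restrict_mem measurableSet_Ioi).mono hbound)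
    ((integrableOn_const (C := C) measure_Icc_lt_top.ne).integrable_indicator
      measurableSet_Icc).integrableOn
    (Eventually.of_forall fun t x _ => hG'x x t)).differentiableAt

lemma hasDerivAt_add_smul (x c : ℝ × ℝ) (t : ℝ) : HasDerivAt (fun s : ℝ => x + s • c) c t := by
  simpa using ((hasDerivAt_id t).smul_const c).const_add x

def perpDot : (ℝ × ℝ) →L[ℝ] (ℝ × ℝ) →L[ℝ] ℝ :=
  (ContinuousLinearMap.snd ℝ ℝ ℝ).smulRight (ContinuousLinearMap.fst ℝ ℝ ℝ) -
    (ContinuousLinearMap.fst ℝ ℝ ℝ).smulRight (ContinuousLinearMap.snd ℝ ℝ ℝ)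

@[simp] lemma perpDot_apply (a h : ℝ × ℝ) : perpDot a h = dot (perp h) a := by
  simp [perpDot, dot, perp]
  ring

lemma pgrad_eq_of_hasFDerivAt {φ : ℝ × ℝ → ℝ} {a x : ℝ × ℝ} (h : HasFDerivAt φ (perpDot a) x) :
    pgrad φ x = a := by
  simp [pgrad, h.fderiv, dot, perp]

lemma dot_perp_pgrad (φ : ℝ × ℝ → ℝ) (x c : ℝ × ℝ) :
    dot (perp c) (pgrad φ x) = fderiv ℝ φ x c := by
  have hc : c = c.1 • ((1, 0) : ℝ × ℝ) + c.2 • (0, 1) := by ext <;> simp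
  conv_rhs => rw [hc, map_add, map_smul, map_smul]
  simp only [dot, perp, pgrad, smul_eq_mul]
  ring

lemma eq_of_apply_eq_of_linearIndependent {a b : ℝ × ℝ} (h : LinearIndependent ℝ ![a, b])
    {L M : (ℝ × ℝ) →L[ℝ] ℝ} (ha : L a = M a) (hb : L b = M b) : L = M := by
  have hspan := h.span_eq_top_of_card_eq_finrank' (by simp)
  exact ContinuousLinearMap.coe_injective <| LinearMap.ext_on_range hspan fun i => by
    fin_cases i <;> simpa

lemma add_smul_notMem_disc {x c : ℝ × ℝ} (hc : dot c c = 1) {t : ℝ} (ht : 4 * ‖x‖ + 1 ≤ t) :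
    x + t • c ∉ disc := by
  simp only [disc, dot, mem_ofPred_eq, not_lt, Prod.fst_add, Prod.snd_add, Prod.smul_fst,
    Prod.smul_snd, smul_eq_mul] at hc ⊢
  have hcoord {a b : ℝ} (ha : |a| ≤ ‖x‖) (hb : b * b ≤ 1) : -‖x‖ ≤ a * b := by
    refine neg_le_of_abs_le ?_
    rw [abs_mul, ← mul_one ‖x‖]
    exact mul_le_mul ha (abs_le_one_iff_mul_self_le_one.mpr hb) (abs_nonneg b) (norm_nonneg x)
  have h₁ := hcoord (norm_fst_le x) (show c.1 * c.1 ≤ 1 by nlinarith)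
  have h₂ := hcoord (norm_snd_le x) (show c.2 * c.2 ≤ 1 by nlinarith)
  have ht₀ : 0 ≤ t := by linarith [norm_nonneg x]
  have hcc : t * t * (c.1 * c.1 + c.2 * c.2) = t * t := by rw [hc, mul_one]
  nlinarith [mul_le_mul_of_nonneg_left (add_le_add h₁ h₂) ht₀, mul_nonneg ht₀ (sub_nonneg.mpr ht),
    mul_self_nonneg x.1, mul_self_nonneg x.2, norm_nonneg x]

lemma apply_add_smul_eq_zero {M : Type*} [Zero M] {g : ℝ × ℝ → M} (hg : tsupport g ⊆ disc)
    {x c : ℝ × ℝ} (hc : dot c c = 1) {t : ℝ} (ht : 4 * ‖x‖ + 1 ≤ t) : g (x + t • c) = 0 :=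
  image_eq_zero_of_notMem_tsupport fun h => add_smul_notMem_disc hc ht (hg h)

lemma isPreconnected_setOf_lt_sq_add_sq {r : ℝ} (hr : 0 < r) :
    IsPreconnected {p : ℝ × ℝ | r < p.1 ^ 2 + p.2 ^ 2} := by
  have hlt {z : ℂ} (hz : z ≠ 0) : r < z.re ^ 2 + z.im ^ 2 ↔ Real.log r / 2 < Real.log ‖z‖ := by
    have hsq : z.re ^ 2 + z.im ^ 2 = ‖z‖ ^ 2 := by
      rw [Complex.sq_norm, Complex.normSq_apply]
      ring
    rw [hsq, ← Real.log_lt_log_iff hr (by positivity), Real.log_pow]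
    constructor <;> intro h <;> push_cast at h ⊢ <;> linarith
  have himage : (fun z : ℂ => ((Complex.exp z).re, (Complex.exp z).im)) ''
      {z | Real.log r / 2 < z.re} = {p : ℝ × ℝ | r < p.1 ^ 2 + p.2 ^ 2} := by
    ext p
    constructor
    · rintro ⟨z, hz, rfl⟩
      rwa [mem_ofPred_eq, hlt (Complex.exp_ne_zero z), Complex.norm_exp, Real.log_exp]
    · intro hp
      have hz : (⟨p.1, p.2⟩ : ℂ) ≠ 0 := by
        rintro h
        simp only [Complex.ext_iff, Complex.zero_re, Complex.zero_im] at h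
        simp only [mem_ofPred_eq, h.1, h.2] at hp
        linarith
      refine ⟨Complex.log ⟨p.1, p.2⟩, ?_, by simp [Complex.exp_log hz]⟩
      rw [mem_ofPred_eq, Complex.log_re, ← hlt hz]
      exact hp
  rw [← himage]
  exact (convex_halfSpace_re_gt _).isPreconnected.image _ (by fun_prop : Continuous _).continuousOn

lemma tsupport_subset_disc_of_hasFDerivAt_zero {F : Type*} [NormedAddCommGroup F]
    [NormedSpace ℝ F] {φ : ℝ × ℝ → F} {K : Set (ℝ × ℝ)} (hK : IsCompact K) (hKd : K ⊆ disc)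
    (hφ : ∀ x ∉ K, HasFDerivAt φ (0 : (ℝ × ℝ) →L[ℝ] F) x) {y : ℝ × ℝ} (hy : y ∉ disc)
    (hφy : φ y = 0) : tsupport φ ⊆ disc := by
  obtain ⟨δ, hδ, hδK⟩ := hK.exists_forall_le' (f := fun p : ℝ × ℝ => 1 - (p.1 ^ 2 + p.2 ^ 2))
    (by fun_prop) fun p hp => sub_pos.mpr (hKd hp)
  set ρ := max (1 - δ) (1 / 2)
  have hρ : ρ < 1 := max_lt (by linarith) (by norm_num)
  have hA : ∀ x ∈ {p : ℝ × ℝ | ρ < p.1 ^ 2 + p.2 ^ 2}, x ∉ K := fun x hx hxK => by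
    have := hδK x hxK
    simp only [mem_ofPred_eq] at hx
    linarith [le_max_left (1 - δ) (1 / 2)]
  have hzero : ∀ x ∈ {p : ℝ × ℝ | ρ < p.1 ^ 2 + p.2 ^ 2}, φ x = 0 := fun x hx =>
    hφy ▸ (isOpen_lt continuous_const (by fun_prop)).is_const_of_fderiv_eq_zero
      (isPreconnected_setOf_lt_sq_add_sq (by positivity))
      (fun z hz => (hφ z (hA z hz)).differentiableAt.differentiableWithinAt)
      (fun z hz => (hφ z (hA z hz)).fderiv) hx
      (by simp only [disc, mem_ofPred_eq, not_lt] at hy ⊢; linarith)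
  have hsub : tsupport φ ⊆ {p : ℝ × ℝ | p.1 ^ 2 + p.2 ^ 2 ≤ ρ} :=
    closure_minimal (fun x hx => show _ ≤ ρ from not_lt.mp fun h => hx (hzero x h))
      (isClosed_le (by fun_prop) continuous_const)
  exact fun x hx => lt_of_le_of_lt (hsub hx) hρ

def rayIntegrand (w f : ℝ × ℝ → ℝ × ℝ) (x : ℝ × ℝ) (t : ℝ) : ℝ :=
  dot (perp (w x)) (f (x + t • w x))

def rayPotential (w f : ℝ × ℝ → ℝ × ℝ) (x : ℝ × ℝ) : ℝ :=
  -∫ t in Ioi 0, rayIntegrand w f x t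

lemma T1_eq_sub (u v f : ℝ × ℝ → ℝ × ℝ) (x : ℝ × ℝ) :
    T1 u v f x = rayPotential u f x - rayPotential v f x := by
  unfold T1 rayPotential rayIntegrand
  ring

section Ray

variable {w f : ℝ × ℝ → ℝ × ℝ} {x : ℝ × ℝ}

lemma rayIntegrand_eq_zero (hsupp : tsupport f ⊆ disc) (hw : dot (w x) (w x) = 1) {t : ℝ}
    (ht : 4 * ‖x‖ + 1 ≤ t) : rayIntegrand w f x t = 0 := by
  rw [rayIntegrand, apply_add_smul_eq_zero hsupp hw ht]
  simp [dot]

lemma continuous_rayIntegrand (hf : Continuous f) : Continuous (rayIntegrand w f x) := by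
  unfold rayIntegrand dot
  fun_prop

lemma contDiff_rayIntegrand (hw : ContDiff ℝ 1 w) (hf : ContDiff ℝ 1 f) :
    ContDiff ℝ 1 fun p : (ℝ × ℝ) × ℝ => rayIntegrand w f p.1 p.2 := by
  unfold rayIntegrand dot perp
  fun_prop

lemma integrableOn_rayIntegrand (hf : Continuous f) (hsupp : tsupport f ⊆ disc)
    (hw : dot (w x) (w x) = 1) (a : ℝ) : IntegrableOn (rayIntegrand w f x) (Ioi a) :=
  integrableOn_Ioi_of_eq_zero (continuous_rayIntegrand hf)
    (fun _ => rayIntegrand_eq_zero hsupp hw) a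

lemma rayPotential_add_smul (hline : ∀ t : ℝ, 0 ≤ t → w (x + t • w x) = w x) {s : ℝ} (hs : 0 ≤ s) :
    rayPotential w f (x + s • w x) = -∫ t in Ioi s, rayIntegrand w f x t := by
  have hshift : ∀ t, rayIntegrand w f (x + s • w x) t = rayIntegrand w f x (s + t) := by
    intro t
    rw [rayIntegrand, rayIntegrand, hline s hs, add_smul, add_assoc]
  simp_rw [rayPotential, hshift]
  rw [setIntegral_Ioi_comp_const_add (rayIntegrand w f x) s]

lemma rayPotential_add_smul_eq_zero (hsupp : tsupport f ⊆ disc) (hw : dot (w x) (w x) = 1)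
    (hline : ∀ t : ℝ, 0 ≤ t → w (x + t • w x) = w x) {s : ℝ} (hs : 4 * ‖x‖ + 1 ≤ s) :
    rayPotential w f (x + s • w x) = 0 := by
  rw [rayPotential_add_smul hline (by linarith [norm_nonneg x]),
    setIntegral_congr_fun measurableSet_Ioi (g := 0)
      fun t ht => rayIntegrand_eq_zero hsupp hw (hs.trans (le_of_lt ht))]
  simp

lemma hasDerivWithinAt_rayPotential_add_smul (hf : Continuous f) (hsupp : tsupport f ⊆ disc)
    (hw : dot (w x) (w x) = 1) (hline : ∀ t : ℝ, 0 ≤ t → w (x + t • w x) = w x) :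
    HasDerivWithinAt (fun s : ℝ => rayPotential w f (x + s • w x)) (dot (perp (w x)) (f x))
      (Ici 0) 0 := by
  set g := rayIntegrand w f x
  have hFTC : HasDerivAt (fun s => (-∫ t in Ioi 0, g t) + ∫ t in 0..s, g t) (g 0) 0 :=
    ((continuous_rayIntegrand hf).integral_hasStrictDerivAt 0 0).hasDerivAt.const_add _
  have heq : EqOn (fun s : ℝ => rayPotential w f (x + s • w x))
      (fun s => (-∫ t in Ioi 0, g t) + ∫ t in 0..s, g t) (Ici 0) := by
    intro s hs
    dsimp only
    rw [rayPotential_add_smul hline hs, ← intervalIntegral.integral_Ioi_sub_Ioi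
      (integrableOn_rayIntegrand hf hsupp hw 0) hs]
    ring
  simpa [g, rayIntegrand] using hFTC.hasDerivWithinAt.congr heq (heq self_mem_Ici)

lemma fderiv_rayPotential_apply (hf : Continuous f) (hsupp : tsupport f ⊆ disc)
    (hw : dot (w x) (w x) = 1) (hline : ∀ t : ℝ, 0 ≤ t → w (x + t • w x) = w x)
    (hd : DifferentiableAt ℝ (rayPotential w f) x) :
    fderiv ℝ (rayPotential w f) x (w x) = dot (perp (w x)) (f x) := by
  have hd' : HasFDerivAt (rayPotential w f) (fderiv ℝ (rayPotential w f) x)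
      (x + (0 : ℝ) • w x) := by
    simpa using hd.hasFDerivAt
  exact (uniqueDiffWithinAt_Ici 0).eq_deriv _
    (hd'.comp_hasDerivAt (x := (0 : ℝ)) (f := fun s : ℝ => x + s • w x)
      (hasDerivAt_add_smul x (w x) 0)).hasDerivWithinAt
    (hasDerivWithinAt_rayPotential_add_smul hf hsupp hw hline)

lemma differentiable_rayPotential (hw : ContDiff ℝ 1 w) (hf : ContDiff ℝ 1 f)
    (hsupp : tsupport f ⊆ disc) (hunit : ∀ x, dot (w x) (w x) = 1) :
    Differentiable ℝ (rayPotential w f) := by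
  intro x₀
  refine (differentiableAt_integral_Ioi_of_contDiff (contDiff_rayIntegrand hw hf)
    (R := 4 * (‖x₀‖ + 1) + 1) fun x hx t ht => rayIntegrand_eq_zero hsupp (hunit x) ?_).neg
  have : ‖x‖ ≤ ‖x₀‖ + 1 := by
    have := norm_le_insert' x x₀
    linarith [mem_ball_iff_norm.mp hx]
  linarith

end Ray

lemma hasFDerivAt_rayPotential_perpDot {u v f : ℝ × ℝ → ℝ × ℝ} (hu : ContDiff ℝ 1 u)
    (hf : ContDiff ℝ 1 f) (hsupp : tsupport f ⊆ disc) (hunitu : ∀ x, dot (u x) (u x) = 1)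
    {x : ℝ × ℝ} (hunitv : dot (v x) (v x) = 1)
    (hlineu : ∀ t : ℝ, 0 ≤ t → u (x + t • u x) = u x)
    (hlinev : ∀ t : ℝ, 0 ≤ t → v (x + t • v x) = v x)
    (hind : LinearIndependent ℝ ![u x, v x]) (huv : rayPotential u f = rayPotential v f) :
    HasFDerivAt (rayPotential u f) (perpDot (f x)) x := by
  have hd := differentiable_rayPotential hu hf hsupp hunitu x
  refine hd.hasFDerivAt.congr_fderiv (eq_of_apply_eq_of_linearIndependent hind ?_ ?_)
  · rw [fderiv_rayPotential_apply hf.continuous hsupp (hunitu x) hlineu hd, perpDot_apply]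
  · rw [huv] at hd ⊢
    rw [fderiv_rayPotential_apply hf.continuous hsupp hunitv hlinev hd, perpDot_apply]

lemma rayPotential_eq_of_eq_pgrad {w f : ℝ × ℝ → ℝ × ℝ} {φ : ℝ × ℝ → ℝ} {x : ℝ × ℝ}
    (hf : Continuous f) (hsupp : tsupport f ⊆ disc) (hw : dot (w x) (w x) = 1)
    (hφ : Differentiable ℝ φ) (hφsupp : tsupport φ ⊆ disc) (hfφ : ∀ y, f y = pgrad φ y) :
    rayPotential w f x = φ x := by
  have hderiv : ∀ t, HasDerivAt (fun s => φ (x + s • w x)) (rayIntegrand w f x t) t := by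
    intro t
    rw [rayIntegrand, hfφ, dot_perp_pgrad]
    exact (hφ _).hasFDerivAt.comp_hasDerivAt t (hasDerivAt_add_smul x (w x) t)
  have hlim : Tendsto (fun s => φ (x + s • w x)) atTop (𝓝 0) :=
    tendsto_const_nhds.congr' <| eventually_atTop.mpr
      ⟨4 * ‖x‖ + 1, fun s hs => (apply_add_smul_eq_zero hφsupp hw hs).symm⟩
  rw [rayPotential, integral_Ioi_of_hasDerivAt_of_tendsto (hderiv 0).continuousAt.continuousWithinAt
    (fun t _ => hderiv t) (integrableOn_rayIntegrand hf hsupp hw 0) hlim]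
  simp

end VLineTransform

open VLineTransform in
theorem stmt6_general
    (u v : ℝ × ℝ → ℝ × ℝ) (hu : ContDiff ℝ 1 u)
    (hunitu : ∀ x, dot (u x) (u x) = 1) (hunitv : ∀ x, dot (v x) (v x) = 1)
    (hlineu : ∀ (x : ℝ × ℝ) (t : ℝ), 0 ≤ t → u (x + t • u x) = u x)
    (hlinev : ∀ (x : ℝ × ℝ) (t : ℝ), 0 ≤ t → v (x + t • v x) = v x)
    (hind : ∀ x, LinearIndependent ℝ ![u x, v x])
    (f : ℝ × ℝ → ℝ × ℝ) (hf : ContDiff ℝ 2 f)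
    (hcs : HasCompactSupport f) (hsupp : tsupport f ⊆ disc) :
    (∀ x, T1 u v f x = 0) ↔
      ∃ φ : ℝ × ℝ → ℝ, ContDiff ℝ 3 φ ∧ tsupport φ ⊆ disc ∧ ∀ x, f x = pgrad φ x := by
  constructor
  · intro hT
    have huv : rayPotential u f = rayPotential v f :=
      funext fun x => sub_eq_zero.mp ((T1_eq_sub u v f x).symm.trans (hT x))
    have hφ : ∀ x, HasFDerivAt (rayPotential u f) (perpDot (f x)) x := fun x =>
      hasFDerivAt_rayPotential_perpDot hu (hf.of_le one_le_two) hsupp hunitu (hunitv x)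
        (hlineu x) (hlinev x) (hind x) huv
    refine ⟨rayPotential u f, ?_, ?_, fun x => (pgrad_eq_of_hasFDerivAt (hφ x)).symm⟩
    · exact (contDiff_succ_iff_hasFDerivAt (n := 2)).mpr ⟨_, perpDot.contDiff.comp hf, hφ⟩
    · refine tsupport_subset_disc_of_hasFDerivAt_zero hcs hsupp (fun x hx => ?_)
        (add_smul_notMem_disc (x := 0) (t := 1) (hunitu 0) (by simp))
        (rayPotential_add_smul_eq_zero hsupp (hunitu 0) (hlineu 0) (by simp))
      simpa [image_eq_zero_of_notMem_tsupport hx] using hφ x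
  · rintro ⟨φ, hφ, hφsupp, hfφ⟩ x
    have hφd : Differentiable ℝ φ := hφ.differentiable (by norm_num)
    rw [T1_eq_sub, rayPotential_eq_of_eq_pgrad hf.continuous hsupp (hunitu x) hφd hφsupp hfφ,
      rayPotential_eq_of_eq_pgrad hf.continuous hsupp (hunitv x) hφd hφsupp hfφ, sub_self]

theorem stmt6
    (u v : ℝ × ℝ → ℝ × ℝ) (hu : ContDiff ℝ 1 u) (hv : ContDiff ℝ 1 v)
    (hunitu : ∀ x, dot (u x) (u x) = 1) (hunitv : ∀ x, dot (v x) (v x) = 1)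
    (hlineu : ∀ (x : ℝ × ℝ) (t : ℝ), 0 ≤ t → u (x + t • u x) = u x)
    (hlinev : ∀ (x : ℝ × ℝ) (t : ℝ), 0 ≤ t → v (x + t • v x) = v x)
    (hind : ∀ x, LinearIndependent ℝ ![u x, v x])
    (f : ℝ × ℝ → ℝ × ℝ) (hf : ContDiff ℝ 2 f)
    (hcs : HasCompactSupport f) (hsupp : tsupport f ⊆ disc) :
    (∀ x, T1 u v f x = 0) ↔
      ∃ φ : ℝ × ℝ → ℝ, ContDiff ℝ 3 φ ∧ tsupport φ ⊆ disc ∧ ∀ x, f x = pgrad φ x :=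
  stmt6_general u v hu hunitu hunitv hlineu hlinev hind f hf hcs hsupp
end
end

section
/- Let φ : ℝ² → ℝ be a C² scalar function compactly supported in 𝔻. Then for all x ∈ ℝ²: L₁¹(∇φ)(x) = ∫₀^∞ φ(x + t·u(x)) dt − ∫₀^∞ φ(x + t·v(x)) dt, i.e. the first moment longitudinal V-line transform of the gradient field ∇φ equals the weighted V-line transform V₋₁φ of φ with weight α = −1. -/
open MeasureTheory

noncomputable section

/-- Gradient of a scalar function on `ℝ²`. -/
def grad (φ : ℝ × ℝ → ℝ) (x : ℝ × ℝ) : ℝ × ℝ :=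
  (fderiv ℝ φ x (1, 0), fderiv ℝ φ x (0, 1))

/-- First moment longitudinal V-line transform with weight `α = 1`. -/
def L1m (u v : ℝ × ℝ → ℝ × ℝ) (f : ℝ × ℝ → ℝ × ℝ) (x : ℝ × ℝ) : ℝ :=
  (- ∫ t in Set.Ioi (0 : ℝ), t * dot (u x) (f (x + t • u x))) +
    ∫ t in Set.Ioi (0 : ℝ), t * dot (v x) (f (x + t • v x))

/-!
Along each ray `t ↦ x + t • w` the integrand `t * (w · ∇φ)` is `t * g' t` for
`g t = φ (x + t • w)`, and integration by parts turns `∫₀^∞ t g'` into `-∫₀^∞ g`: the boundary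
term `t g(t)` vanishes at `0` and, `g` being compactly supported, at infinity.
-/

open Set Filter Topology

theorem integral_Ioi_mul_deriv_eq_neg_integral {g : ℝ → ℝ} (hg : ContDiff ℝ 1 g)
    (hcs : HasCompactSupport g) :
    ∫ t in Ioi (0 : ℝ), t * deriv g t = -∫ t in Ioi (0 : ℝ), g t := by
  have hg' : Continuous (deriv g) := hg.continuous_deriv le_rfl
  have hat_zero : Tendsto (id * g) (𝓝[>] 0) (𝓝 0) := by
    simpa using ((continuous_id.mul hg.continuous).tendsto 0).mono_left nhdsWithin_le_nhds
  have hat_top : Tendsto (id * g) atTop (𝓝 0) :=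
    hcs.mul_left.is_zero_at_infty.mono_left atTop_le_cocompact
  simpa using integral_Ioi_mul_deriv_eq_deriv_mul
    (fun t _ => hasDerivAt_id t) (fun t _ => (hg.differentiable one_ne_zero t).hasDerivAt)
    ((continuous_id.mul hg').integrable_of_hasCompactSupport hcs.deriv.mul_left).integrableOn
    ((continuous_const.mul hg.continuous).integrable_of_hasCompactSupport
      hcs.mul_left).integrableOn
    hat_zero hat_top

lemma fderiv_apply_eq_dot_grad (φ : ℝ × ℝ → ℝ) (y w : ℝ × ℝ) :
    fderiv ℝ φ y w = dot w (grad φ y) := by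
  have hw : w = w.1 • ((1 : ℝ), (0 : ℝ)) + w.2 • ((0 : ℝ), (1 : ℝ)) := by simp
  rw [hw, map_add, map_smul, map_smul]
  simp [dot, grad]

lemma deriv_comp_add_smul {φ : ℝ × ℝ → ℝ} (hφ : Differentiable ℝ φ) (x w : ℝ × ℝ) (t : ℝ) :
    deriv (fun s : ℝ => φ (x + s • w)) t = dot w (grad φ (x + t • w)) := by
  have hline : HasDerivAt (fun s : ℝ => x + s • w) w t := by
    simpa using ((hasDerivAt_id t).smul_const w).const_add x
  rw [← fderiv_apply_eq_dot_grad]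
  exact ((hφ _).hasFDerivAt.comp_hasDerivAt t hline).deriv

lemma HasCompactSupport.comp_add_smul_s10 {φ : ℝ × ℝ → ℝ} (hcs : HasCompactSupport φ)
    (x : ℝ × ℝ) {w : ℝ × ℝ} (hw : w ≠ 0) :
    HasCompactSupport fun s : ℝ => φ (x + s • w) :=
  hcs.comp_isClosedEmbedding ((Homeomorph.addLeft x).isClosedEmbedding.comp
    (isClosedEmbedding_smul_left hw))

theorem integral_Ioi_mul_dot_grad_eq_neg_integral {φ : ℝ × ℝ → ℝ} (hφ : ContDiff ℝ 1 φ)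
    (hcs : HasCompactSupport φ) (x : ℝ × ℝ) {w : ℝ × ℝ} (hw : w ≠ 0) :
    ∫ t in Ioi (0 : ℝ), t * dot w (grad φ (x + t • w)) =
      -∫ t in Ioi (0 : ℝ), φ (x + t • w) := by
  simp_rw [← deriv_comp_add_smul (hφ.differentiable one_ne_zero) x w]
  exact integral_Ioi_mul_deriv_eq_neg_integral (by fun_prop) (hcs.comp_add_smul_s10 x hw)

lemma ne_zero_of_dot_self_eq_one {w : ℝ × ℝ} (hw : dot w w = 1) : w ≠ 0 := by
  rintro rfl
  simp [dot] at hw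

theorem stmt10_general
    (u v : ℝ × ℝ → ℝ × ℝ)
    (hunitu : ∀ x, dot (u x) (u x) = 1) (hunitv : ∀ x, dot (v x) (v x) = 1)
    (φ : ℝ × ℝ → ℝ) (hφ : ContDiff ℝ 2 φ)
    (hcs : HasCompactSupport φ) :
    ∀ x, L1m u v (grad φ) x =
      (∫ t in Set.Ioi (0 : ℝ), φ (x + t • u x)) -
        ∫ t in Set.Ioi (0 : ℝ), φ (x + t • v x) := by
  intro x
  have hφ₁ : ContDiff ℝ 1 φ := hφ.of_le (by norm_num)
  rw [L1m,
    integral_Ioi_mul_dot_grad_eq_neg_integral hφ₁ hcs x (ne_zero_of_dot_self_eq_one (hunitu x)),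
    integral_Ioi_mul_dot_grad_eq_neg_integral hφ₁ hcs x (ne_zero_of_dot_self_eq_one (hunitv x))]
  ring

theorem stmt10
    (u v : ℝ × ℝ → ℝ × ℝ) (hu : ContDiff ℝ 1 u) (hv : ContDiff ℝ 1 v)
    (hunitu : ∀ x, dot (u x) (u x) = 1) (hunitv : ∀ x, dot (v x) (v x) = 1)
    (hlineu : ∀ (x : ℝ × ℝ) (t : ℝ), 0 ≤ t → u (x + t • u x) = u x)
    (hlinev : ∀ (x : ℝ × ℝ) (t : ℝ), 0 ≤ t → v (x + t • v x) = v x)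
    (hind : ∀ x, LinearIndependent ℝ ![u x, v x])
    (φ : ℝ × ℝ → ℝ) (hφ : ContDiff ℝ 2 φ)
    (hcs : HasCompactSupport φ) (hsupp : tsupport φ ⊆ disc) :
    ∀ x, L1m u v (grad φ) x =
      (∫ t in Set.Ioi (0 : ℝ), φ (x + t • u x)) -
        ∫ t in Set.Ioi (0 : ℝ), φ (x + t • v x) :=
  stmt10_general u v hunitu hunitv φ hφ hcs
end
end

section
/- Let f = (f₁,f₂) : ℝ² → ℝ² be a C² vector field compactly supported in 𝔻. Then for all x ∈ ℝ²: (D_u D_v L_α f)(x) = (∂̃₁f₂)(x) − (∂̃₂f₁)(x), where ∂̃₁ = −(1+α)u₁u₂∂₁ + (1−α)u₂²∂₂ and ∂̃₂ = (1−α)u₁²∂₁ − (1+α)u₁u₂∂₂. -/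
open MeasureTheory

noncomputable section

/-- Directional derivative along a constant vector `w`. -/
def Dc (w : ℝ × ℝ) (F : ℝ × ℝ → ℝ) (x : ℝ × ℝ) : ℝ := fderiv ℝ F x w

/-- The tilde partial derivative `∂̃₁ = −(1+α)u₁u₂∂₁ + (1−α)u₂²∂₂`. -/
def pt1 (α u₁ u₂ : ℝ) (g : ℝ × ℝ → ℝ) (x : ℝ × ℝ) : ℝ :=
  -(1 + α) * u₁ * u₂ * fderiv ℝ g x (1, 0) + (1 - α) * u₂ ^ 2 * fderiv ℝ g x (0, 1)

/-- The tilde partial derivative `∂̃₂ = (1−α)u₁²∂₁ − (1+α)u₁u₂∂₂`. -/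
def pt2 (α u₁ u₂ : ℝ) (g : ℝ × ℝ → ℝ) (x : ℝ × ℝ) : ℝ :=
  (1 - α) * u₁ ^ 2 * fderiv ℝ g x (1, 0) - (1 + α) * u₁ * u₂ * fderiv ℝ g x (0, 1)

/-- Longitudinal V-line transform with weight `α` and constant branch directions. -/
def Lc (α : ℝ) (u v : ℝ × ℝ) (f : ℝ × ℝ → ℝ × ℝ) (x : ℝ × ℝ) : ℝ :=
  (- ∫ t in Set.Ioi (0 : ℝ), dot u (f (x + t • u))) +
    α * ∫ t in Set.Ioi (0 : ℝ), dot v (f (x + t • v))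

/-- Transverse V-line transform with weight `α` and constant branch directions. -/
def Tc (α : ℝ) (u v : ℝ × ℝ) (f : ℝ × ℝ → ℝ × ℝ) (x : ℝ × ℝ) : ℝ :=
  (- ∫ t in Set.Ioi (0 : ℝ), dot (perp u) (f (x + t • u))) +
    α * ∫ t in Set.Ioi (0 : ℝ), dot (perp v) (f (x + t • v))


/-! For `g` of class `C¹` with compact support and `w ≠ 0`, write `R_w g x = ∫₀^∞ g (x + t w) dt`.
Differentiating under the integral sign gives `D_{w'} R_w g = R_w (D_{w'} g)`, and the fundamental
theorem of calculus along the ray gives `D_w R_w g = -g`. Since `L_α f = -R_u (u·f) + α R_v (v·f)`,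
this yields `D_u D_v L_α f = D_v (u·f) - α D_u (v·f)`, and expanding both directional derivatives
in the partial derivatives of `f₁, f₂` produces `∂̃₁ f₂ - ∂̃₂ f₁`. -/

open Set Filter Topology Metric

section RayIntegral

variable {E F : Type*} [NormedAddCommGroup E] [NormedSpace ℝ E] [NormedAddCommGroup F]

def rayIntegral [NormedSpace ℝ F] (w : E) (g : E → F) (x : E) : F :=
  ∫ t in Ioi (0 : ℝ), g (x + t • w)

lemma eventually_atTop_forall_ball_add_smul_notMem {K : Set E} (hK : Bornology.IsBounded K)
    {w : E} (hw : w ≠ 0) (x : E) : ∀ᶠ t : ℝ in atTop, ∀ y ∈ ball x 1, y + t • w ∉ K := by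
  obtain ⟨R, hR⟩ := (hK.sub isBounded_ball).subset_closedBall 0
  filter_upwards [eventually_gt_atTop (R / ‖w‖)] with t ht y hy hmem
  have htw : t • w ∈ closedBall (0 : E) R := hR ⟨_, hmem, y, hy, add_sub_cancel_left y _⟩
  rw [mem_closedBall_zero_iff, norm_smul, Real.norm_eq_abs] at htw
  rw [div_lt_iff₀ (norm_pos_iff.2 hw)] at ht
  linarith [le_abs_self t, mul_le_mul_of_nonneg_right (le_abs_self t) (norm_nonneg w)]

lemma HasCompactSupport.comp_ray {g : E → F} (hg : HasCompactSupport g) {w : E} (hw : w ≠ 0)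
    (x : E) : HasCompactSupport fun t : ℝ => g (x + t • w) :=
  hg.comp_isClosedEmbedding
    ((Homeomorph.addLeft x).isClosedEmbedding.comp (isClosedEmbedding_smul_left hw))

lemma integrableOn_Ioi_comp_ray [NormedSpace ℝ F] {g : E → F} (hg : Continuous g)
    (hcs : HasCompactSupport g) {w : E} (hw : w ≠ 0) (x : E) :
    IntegrableOn (fun t : ℝ => g (x + t • w)) (Ioi 0) :=
  ((hg.comp (by fun_prop)).integrable_of_hasCompactSupport (hcs.comp_ray hw x)).integrableOn

lemma tendsto_comp_ray_atTop_zero {g : E → F} (hcs : HasCompactSupport g) {w : E} (hw : w ≠ 0)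
    (x : E) : Tendsto (fun t : ℝ => g (x + t • w)) atTop (𝓝 0) := by
  refine tendsto_const_nhds.congr' ?_
  filter_upwards [eventually_atTop_forall_ball_add_smul_notMem hcs.isCompact.isBounded hw x]
    with t ht
  exact (image_eq_zero_of_notMem_tsupport (ht x (mem_ball_self one_pos))).symm

lemma hasFDerivAt_rayIntegral [NormedSpace ℝ F] {g : E → F} (hg : ContDiff ℝ 1 g)
    (hcs : HasCompactSupport g) {w : E} (hw : w ≠ 0) (x : E) :
    HasFDerivAt (rayIntegral w g) (rayIntegral w (fderiv ℝ g) x) x := by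
  have hg' : Continuous (fderiv ℝ g) := hg.continuous_fderiv one_ne_zero
  obtain ⟨C, hC⟩ := (hcs.fderiv ℝ).exists_bound_of_continuous hg'
  obtain ⟨T, hT⟩ := (eventually_atTop_forall_ball_add_smul_notMem
    (hcs.fderiv ℝ).isCompact.isBounded hw x).exists_forall_of_atTop
  refine hasFDerivAt_integral_of_dominated_of_fderiv_le (ball_mem_nhds x one_pos)
    (F := fun y t => g (y + t • w)) (F' := fun y t => fderiv ℝ g (y + t • w))
    (bound := (Icc 0 T).indicator fun _ => C)
    (Eventually.of_forall fun y => (hg.continuous.comp (by fun_prop)).aestronglyMeasurable)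
    (integrableOn_Ioi_comp_ray hg.continuous hcs hw x)
    (hg'.comp (by fun_prop)).aestronglyMeasurable ?_
    ((integrableOn_const measure_Icc_lt_top.ne).integrable_indicator measurableSet_Icc).restrict
    (Eventually.of_forall fun t y _ => ?_)
  · refine (ae_restrict_iff' measurableSet_Ioi).2 (Eventually.of_forall fun t ht y hy => ?_)
    by_cases htT : t ≤ T
    · rw [indicator_of_mem (mem_Icc.2 ⟨le_of_lt ht, htT⟩)]
      exact hC _
    · rw [image_eq_zero_of_notMem_tsupport (hT t (le_of_not_ge htT) y hy),
        indicator_of_notMem fun h => htT h.2, norm_zero]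
  · exact (hg.differentiable one_ne_zero _).hasFDerivAt.comp y
      ((hasFDerivAt_id y).add_const (t • w))

lemma fderiv_rayIntegral_apply [NormedSpace ℝ F] {g : E → F} (hg : ContDiff ℝ 1 g)
    (hcs : HasCompactSupport g) {w : E} (hw : w ≠ 0) (x w' : E) :
    fderiv ℝ (rayIntegral w g) x w' = rayIntegral w (fun y => fderiv ℝ g y w') x := by
  rw [(hasFDerivAt_rayIntegral hg hcs hw x).fderiv, rayIntegral, rayIntegral,
    ContinuousLinearMap.integral_apply
      (integrableOn_Ioi_comp_ray (hg.continuous_fderiv one_ne_zero) (hcs.fderiv ℝ) hw x)]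

lemma fderiv_rayIntegral_apply_self [NormedSpace ℝ F] [CompleteSpace F] {g : E → F}
    (hg : ContDiff ℝ 1 g) (hcs : HasCompactSupport g) {w : E} (hw : w ≠ 0) (x : E) :
    fderiv ℝ (rayIntegral w g) x w = -g x := by
  have hderiv : ∀ t ∈ Ici (0 : ℝ),
      HasDerivAt (fun t : ℝ => g (x + t • w)) (fderiv ℝ g (x + t • w) w) t := fun t _ =>
    (hg.differentiable one_ne_zero _).hasFDerivAt.comp_hasDerivAt t
      (by simpa using ((hasDerivAt_id t).smul_const w).const_add x)
  have hint := integrableOn_Ioi_comp_ray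
    ((hg.continuous_fderiv one_ne_zero).clm_apply continuous_const) (hcs.fderiv_apply ℝ w) hw x
  rw [fderiv_rayIntegral_apply hg hcs hw, rayIntegral,
    integral_Ioi_of_hasDerivAt_of_tendsto' hderiv hint (tendsto_comp_ray_atTop_zero hcs hw x)]
  simp

end RayIntegral

lemma Lc_eq_rayIntegral (α : ℝ) (u v : ℝ × ℝ) (f : ℝ × ℝ → ℝ × ℝ) :
    Lc α u v f = fun x =>
      -rayIntegral u (fun y => dot u (f y)) x + α * rayIntegral v (fun y => dot v (f y)) x :=
  rfl

lemma contDiff_dot_comp {n : WithTop ℕ∞} {f : ℝ × ℝ → ℝ × ℝ} (hf : ContDiff ℝ n f)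
    (a : ℝ × ℝ) : ContDiff ℝ n fun y => dot a (f y) := by
  unfold dot
  fun_prop

lemma HasCompactSupport.dot_comp {f : ℝ × ℝ → ℝ × ℝ} (hf : HasCompactSupport f) (a : ℝ × ℝ) :
    HasCompactSupport fun y => dot a (f y) :=
  hf.comp_left (g := dot a) (by simp [dot])

lemma Dc_Lc_eq (α : ℝ) {u v : ℝ × ℝ} (hu : u ≠ 0) (hv : v ≠ 0) {f : ℝ × ℝ → ℝ × ℝ}
    (hf : ContDiff ℝ 1 f) (hcs : HasCompactSupport f) :
    Dc v (Lc α u v f) =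
      fun y => -rayIntegral u (Dc v fun z => dot u (f z)) y - α * dot v (f y) := by
  funext y
  have ha := contDiff_dot_comp hf u
  have hb := contDiff_dot_comp hf v
  have hdu := (hasFDerivAt_rayIntegral ha (hcs.dot_comp u) hu y).differentiableAt
  have hdv := (hasFDerivAt_rayIntegral hb (hcs.dot_comp v) hv y).differentiableAt
  rw [Dc, Lc_eq_rayIntegral, fderiv_fun_add hdu.fun_neg (hdv.const_mul α), fderiv_fun_neg,
    fderiv_const_mul hdv]
  simp only [add_apply, neg_apply, smul_apply, smul_eq_mul,
    fderiv_rayIntegral_apply ha (hcs.dot_comp u) hu,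
    fderiv_rayIntegral_apply_self hb (hcs.dot_comp v) hv, mul_neg, ← sub_eq_add_neg]
  rfl

theorem Dc_Dc_Lc_eq (α : ℝ) (u v : ℝ × ℝ) {f : ℝ × ℝ → ℝ × ℝ} (hf : ContDiff ℝ 2 f)
    (hcs : HasCompactSupport f) (x : ℝ × ℝ) :
    Dc u (Dc v (Lc α u v f)) x =
      Dc v (fun y => dot u (f y)) x - α * Dc u (fun y => dot v (f y)) x := by
  rcases eq_or_ne u 0 with rfl | hu
  · simp [Dc, dot]
  rcases eq_or_ne v 0 with rfl | hv
  · unfold Dc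
    simp [dot]
  have hDva : ContDiff ℝ 1 (Dc v fun y => dot u (f y)) :=
    ((contDiff_dot_comp hf u).fderiv_right le_rfl).clm_apply contDiff_const
  have hcsDva : HasCompactSupport (Dc v fun y => dot u (f y)) :=
    (hcs.dot_comp u).fderiv_apply ℝ v
  have hb : ContDiff ℝ 1 fun y => dot v (f y) := contDiff_dot_comp (hf.of_le one_le_two) v
  have hdu := (hasFDerivAt_rayIntegral hDva hcsDva hu x).differentiableAt
  have hdb := hb.differentiable one_ne_zero x
  rw [Dc_Lc_eq α hu hv (hf.of_le one_le_two) hcs, Dc,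
    fderiv_fun_sub hdu.fun_neg (hdb.const_mul α), fderiv_fun_neg, fderiv_const_mul hdb]
  simp only [sub_apply, neg_apply, smul_apply, smul_eq_mul,
    fderiv_rayIntegral_apply_self hDva hcsDva hu, neg_neg]
  rfl

lemma Dc_eq_partials (w : ℝ × ℝ) (g : ℝ × ℝ → ℝ) (x : ℝ × ℝ) :
    Dc w g x = w.1 * fderiv ℝ g x (1, 0) + w.2 * fderiv ℝ g x (0, 1) := by
  have hw : w = w.1 • ((1 : ℝ), (0 : ℝ)) + w.2 • ((0 : ℝ), (1 : ℝ)) := by ext <;> simp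
  conv_lhs => rw [Dc, hw]
  rw [map_add, map_smul, map_smul, smul_eq_mul, smul_eq_mul]

lemma Dc_dot_comp {f : ℝ × ℝ → ℝ × ℝ} {x : ℝ × ℝ} (hf : DifferentiableAt ℝ f x) (a w : ℝ × ℝ) :
    Dc w (fun y => dot a (f y)) x =
      a.1 * Dc w (fun y => (f y).1) x + a.2 * Dc w (fun y => (f y).2) x := by
  have h₁ : DifferentiableAt ℝ (fun y => (f y).1) x := hf.fst
  have h₂ : DifferentiableAt ℝ (fun y => (f y).2) x := hf.snd
  simp only [Dc, dot]
  rw [fderiv_fun_add (h₁.const_mul _) (h₂.const_mul _), fderiv_const_mul h₁, fderiv_const_mul h₂]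
  rfl

theorem stmt13_general (α u₁ u₂ : ℝ) (f : ℝ × ℝ → ℝ × ℝ) (hf : ContDiff ℝ 2 f)
    (hcs : HasCompactSupport f) :
    ∀ x, Dc (u₁, u₂) (Dc (-u₁, u₂) (Lc α (u₁, u₂) (-u₁, u₂) f)) x =
      pt1 α u₁ u₂ (fun y => (f y).2) x - pt2 α u₁ u₂ (fun y => (f y).1) x := by
  intro x
  have hfx : DifferentiableAt ℝ f x := hf.differentiable (by norm_num) x
  rw [Dc_Dc_Lc_eq α _ _ hf hcs x, Dc_dot_comp hfx, Dc_dot_comp hfx]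
  simp only [Dc_eq_partials, pt1, pt2]
  ring

theorem stmt13 (α u₁ u₂ : ℝ) (hunit : u₁ ^ 2 + u₂ ^ 2 = 1) (hne : u₁ * u₂ ≠ 0)
    (f : ℝ × ℝ → ℝ × ℝ) (hf : ContDiff ℝ 2 f)
    (hcs : HasCompactSupport f) (hsupp : tsupport f ⊆ disc) :
    ∀ x, Dc (u₁, u₂) (Dc (-u₁, u₂) (Lc α (u₁, u₂) (-u₁, u₂) f)) x =
      pt1 α u₁ u₂ (fun y => (f y).2) x - pt2 α u₁ u₂ (fun y => (f y).1) x :=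
  stmt13_general α u₁ u₂ f hf hcs
end
end

section
/- Let α ∈ ℝ and let f = (f₁,f₂) : ℝ² → ℝ² be a C² vector field compactly supported in 𝔻. Then for all x ∈ ℝ²: (D_u D_v L_α¹f)(x) + ((D_u + D_v) L_α f)(x) = (1+α)·u₁·f₁(x) + (1−α)·u₂·f₂(x). -/
open MeasureTheory

noncomputable section

/-- First moment longitudinal V-line transform with weight `α` and constant branch
directions. -/
def Lc1 (α : ℝ) (u v : ℝ × ℝ) (f : ℝ × ℝ → ℝ × ℝ) (x : ℝ × ℝ) : ℝ :=
  (- ∫ t in Set.Ioi (0 : ℝ), t * dot u (f (x + t • u))) +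
    α * ∫ t in Set.Ioi (0 : ℝ), t * dot v (f (x + t • v))

/-!
Differentiating under the integral sign, `D_w` commutes with every weighted ray integral
`R_φ^e g(x) = ∫₀^∞ φ(t) g(x + te) dt`, and along its own ray the fundamental theorem of calculus
gives `R_1^e (D_e g) = -g` and `R_id^e (D_e g) = -R_1^e g`. Writing `L = -R_1^u g_u + α R_1^v g_v`
and `L¹ = -R_id^u g_u + α R_id^v g_v` with `g_u = u · f`, `g_v = v · f`, this yields
`D_u D_v L¹ = R_1^u (D_v g_u) - α R_1^v (D_u g_v)`, `D_u L = g_u + α R_1^v (D_u g_v)` and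
`D_v L = -R_1^u (D_v g_u) - α g_v`. The ray integrals cancel in the sum, which is `g_u - α g_v`.
-/

open Set Filter Topology Metric

section RayTransform

variable {E F : Type*} [NormedAddCommGroup E] [NormedSpace ℝ E]
  [NormedAddCommGroup F] [NormedSpace ℝ F]

def rayTransform (φ : ℝ → ℝ) (w : E) (g : E → F) (x : E) : F :=
  ∫ t in Ioi 0, φ t • g (x + t • w)

theorem HasCompactSupport.exists_forall_add_smul_eq_zero {β : Type*} [TopologicalSpace β]
    [Zero β] {g : E → β} (hg : HasCompactSupport g) {w : E} (hw : w ≠ 0) (x : E) :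
    ∃ R : ℝ, ∀ y ∈ ball x 1, ∀ t, R ≤ t → g (y + t • w) = 0 := by
  obtain ⟨r, hr⟩ := hg.isCompact.isBounded.subset_closedBall 0
  have hw' : 0 < ‖w‖ := norm_pos_iff.2 hw
  refine ⟨(r + ‖x‖ + 1) / ‖w‖, fun y hy t ht =>
    image_eq_zero_of_notMem_tsupport fun hmem => ?_⟩
  have h_far : r + ‖x‖ + 1 ≤ t * ‖w‖ := (div_le_iff₀ hw').1 ht
  have h_in : ‖y + t • w‖ ≤ r := mem_closedBall_zero_iff.1 (hr hmem)
  have h_near : ‖y‖ - ‖x‖ < 1 := (norm_sub_norm_le y x).trans_lt (mem_ball_iff_norm.1 hy)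
  have h_tri : t * ‖w‖ ≤ ‖y + t • w‖ + ‖y‖ :=
    calc t * ‖w‖ ≤ |t| * ‖w‖ := by gcongr; exact le_abs_self t
      _ = ‖t • w‖ := by rw [norm_smul, Real.norm_eq_abs]
      _ = ‖(y + t • w) - y‖ := by rw [add_sub_cancel_left]
      _ ≤ ‖y + t • w‖ + ‖y‖ := norm_sub_le _ _
  linarith

theorem integrableOn_Ioi_smul_comp_add_smul {g : E → F} (hg : Continuous g)
    (hcs : HasCompactSupport g) {w : E} (hw : w ≠ 0) {φ : ℝ → ℝ} (hφ : Continuous φ)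
    (x : E) :
    IntegrableOn (fun t => φ t • g (x + t • w)) (Ioi 0) := by
  obtain ⟨R, hR⟩ := hcs.exists_forall_add_smul_eq_zero hw x
  have hcont : Continuous fun t : ℝ => φ t • g (x + t • w) := by fun_prop
  refine (hcont.integrableOn_Icc (a := 0) (b := R)).of_forall_sdiff_eq_zero measurableSet_Ioi
    fun t ⟨ht₀, htR⟩ => ?_
  have hRt : R ≤ t := by
    by_contra! h
    exact htR ⟨le_of_lt ht₀, h.le⟩
  simp [hR x (mem_ball_self one_pos) t hRt]

theorem tendsto_smul_comp_add_smul_atTop {g : E → F} (hcs : HasCompactSupport g) {w : E}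
    (hw : w ≠ 0) (φ : ℝ → ℝ) (x : E) :
    Tendsto (fun t => φ t • g (x + t • w)) atTop (𝓝 0) := by
  obtain ⟨R, hR⟩ := hcs.exists_forall_add_smul_eq_zero hw x
  refine tendsto_const_nhds.congr' ?_
  filter_upwards [eventually_ge_atTop R] with t ht
  simp [hR x (mem_ball_self one_pos) t ht]

theorem hasFDerivAt_rayTransform {g : E → F} (hg : ContDiff ℝ 1 g) (hcs : HasCompactSupport g)
    {w : E} (hw : w ≠ 0) {φ : ℝ → ℝ} (hφ : Continuous φ) (x : E) :
    HasFDerivAt (rayTransform φ w g) (rayTransform φ w (fderiv ℝ g) x) x := by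
  have hg' : Continuous (fderiv ℝ g) := hg.continuous_fderiv one_ne_zero
  obtain ⟨R, hR⟩ := (hcs.fderiv ℝ).exists_forall_add_smul_eq_zero hw x
  obtain ⟨C, hC⟩ := (hcs.fderiv ℝ).exists_bound_of_continuous hg'
  have hC₀ : 0 ≤ C := (norm_nonneg _).trans (hC 0)
  refine hasFDerivAt_integral_of_dominated_of_fderiv_le (ball_mem_nhds x one_pos)
    (F' := fun y t => φ t • fderiv ℝ g (y + t • w))
    (bound := (Icc 0 R).indicator fun t => ‖φ t‖ * C) ?_ ?_ ?_ ?_ ?_ ?_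
  · exact Eventually.of_forall fun y =>
      (by fun_prop : Continuous fun t : ℝ => φ t • g (y + t • w)).aestronglyMeasurable
  · exact integrableOn_Ioi_smul_comp_add_smul hg.continuous hcs hw hφ x
  · exact (by fun_prop : Continuous fun t : ℝ => φ t • fderiv ℝ g (x + t • w))
      |>.aestronglyMeasurable
  · filter_upwards [ae_restrict_mem measurableSet_Ioi] with t ht y hy
    rcases le_or_gt t R with htR | hRt
    · rw [indicator_of_mem (show t ∈ Icc 0 R from ⟨le_of_lt ht, htR⟩), norm_smul]
      gcongr
      exact hC _
    · rw [hR y hy t hRt.le, smul_zero, norm_zero]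
      exact indicator_nonneg (fun t _ => mul_nonneg (norm_nonneg _) hC₀) t
  · refine (integrable_indicator_iff measurableSet_Icc).2 ?_ |>.restrict
    exact (hφ.norm.mul continuous_const).integrableOn_Icc
  · refine Eventually.of_forall fun t y _ => ?_
    exact (((hg.differentiable one_ne_zero _).hasFDerivAt.comp y
      ((hasFDerivAt_id y).add_const (t • w))).const_smul (φ t))

theorem fderiv_rayTransform_apply {g : E → F} (hg : ContDiff ℝ 1 g) (hcs : HasCompactSupport g)
    {w : E} (hw : w ≠ 0) {φ : ℝ → ℝ} (hφ : Continuous φ) (x w' : E) :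
    fderiv ℝ (rayTransform φ w g) x w' = rayTransform φ w (fun y => fderiv ℝ g y w') x := by
  rw [(hasFDerivAt_rayTransform hg hcs hw hφ x).fderiv, rayTransform,
    ContinuousLinearMap.integral_apply (integrableOn_Ioi_smul_comp_add_smul
      (hg.continuous_fderiv one_ne_zero) (hcs.fderiv ℝ) hw hφ x)]
  rfl

theorem hasDerivAt_comp_add_smul {g : E → F} (hg : Differentiable ℝ g) (w x : E) (t : ℝ) :
    HasDerivAt (fun t : ℝ => g (x + t • w)) (fderiv ℝ g (x + t • w) w) t := by
  refine (hg _).hasFDerivAt.comp_hasDerivAt t ?_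
  simpa using ((hasDerivAt_id t).smul_const w).const_add x

variable [CompleteSpace F]

theorem rayTransform_one_fderiv_apply_self {g : E → F} (hg : ContDiff ℝ 1 g)
    (hcs : HasCompactSupport g) {w : E} (hw : w ≠ 0) (x : E) :
    rayTransform 1 w (fun y => fderiv ℝ g y w) x = -g x := by
  have hint := integrableOn_Ioi_smul_comp_add_smul ((hg.continuous_fderiv one_ne_zero).clm_apply
    continuous_const) (hcs.fderiv_apply ℝ w) hw continuous_one x
  have hlim := tendsto_smul_comp_add_smul_atTop hcs hw 1 x
  simp only [Pi.one_apply, one_smul] at hint hlim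
  simpa [rayTransform] using integral_Ioi_of_hasDerivAt_of_tendsto'
    (fun t _ => hasDerivAt_comp_add_smul (hg.differentiable one_ne_zero) w x t) hint hlim

theorem rayTransform_id_fderiv_apply_self {g : E → F} (hg : ContDiff ℝ 1 g)
    (hcs : HasCompactSupport g) {w : E} (hw : w ≠ 0) (x : E) :
    rayTransform id w (fun y => fderiv ℝ g y w) x = -rayTransform 1 w g x := by
  have hint₀ := integrableOn_Ioi_smul_comp_add_smul hg.continuous hcs hw continuous_one x
  have hint₁ := integrableOn_Ioi_smul_comp_add_smul ((hg.continuous_fderiv one_ne_zero).clm_apply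
    continuous_const) (hcs.fderiv_apply ℝ w) hw continuous_id x
  have hderiv : ∀ t ∈ Ici (0 : ℝ), HasDerivAt (fun t : ℝ => t • g (x + t • w))
      ((1 : ℝ → ℝ) t • g (x + t • w) + id t • fderiv ℝ g (x + t • w) w) t :=
    fun t _ => ((hasDerivAt_id t).smul
      (hasDerivAt_comp_add_smul (hg.differentiable one_ne_zero) w x t)).congr_deriv
        (by simp [add_comm])
  have hFTC := integral_Ioi_of_hasDerivAt_of_tendsto' hderiv (hint₀.add hint₁)
    (tendsto_smul_comp_add_smul_atTop hcs hw id x)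
  rw [integral_add hint₀ hint₁] at hFTC
  simp only [zero_smul, sub_zero] at hFTC
  exact eq_neg_of_add_eq_zero_right hFTC

end RayTransform

section VLine

variable {E : Type*} [NormedAddCommGroup E] [NormedSpace ℝ E]

/-- With `gu = u · f` and `gv = v · f`, the weights `φ = ψ = 1` give `L_α f` and
`φ = ψ = id` give `L_α¹ f`. -/
def vLineTransform (φ ψ : ℝ → ℝ) (α : ℝ) (u v : E) (gu gv : E → ℝ) (x : E) : ℝ :=
  -rayTransform φ u gu x + α * rayTransform ψ v gv x

variable {φ ψ : ℝ → ℝ} {u v : E} {gu gv : E → ℝ}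

theorem fderiv_vLineTransform_apply (hφ : Continuous φ) (hψ : Continuous ψ) (hu : u ≠ 0)
    (hv : v ≠ 0) (hgu : ContDiff ℝ 1 gu) (hcu : HasCompactSupport gu) (hgv : ContDiff ℝ 1 gv)
    (hcv : HasCompactSupport gv) (α : ℝ) (x w : E) :
    fderiv ℝ (vLineTransform φ ψ α u v gu gv) x w =
      vLineTransform φ ψ α u v (fun y => fderiv ℝ gu y w) (fun y => fderiv ℝ gv y w) x := by
  have hDu := (hasFDerivAt_rayTransform hgu hcu hu hφ x).differentiableAt
  have hDv := (hasFDerivAt_rayTransform hgv hcv hv hψ x).differentiableAt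
  have h : HasFDerivAt (vLineTransform φ ψ α u v gu gv)
      (-fderiv ℝ (rayTransform φ u gu) x + α • fderiv ℝ (rayTransform ψ v gv) x) x :=
    hDu.hasFDerivAt.neg.add (hDv.hasFDerivAt.const_mul α)
  simp [h.fderiv, vLineTransform, fderiv_rayTransform_apply hgu hcu hu hφ,
    fderiv_rayTransform_apply hgv hcv hv hψ]

theorem vLineTransform_moment_identity (hu : u ≠ 0) (hv : v ≠ 0) (hgu : ContDiff ℝ 2 gu)
    (hcu : HasCompactSupport gu) (hgv : ContDiff ℝ 2 gv) (hcv : HasCompactSupport gv)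
    (α : ℝ) (x : E) :
    fderiv ℝ (fun y => fderiv ℝ (vLineTransform id id α u v gu gv) y v) x u +
      (fderiv ℝ (vLineTransform 1 1 α u v gu gv) x u +
        fderiv ℝ (vLineTransform 1 1 α u v gu gv) x v) =
      gu x - α * gv x := by
  have hgu₁ : ContDiff ℝ 1 gu := hgu.of_le one_le_two
  have hgv₁ : ContDiff ℝ 1 gv := hgv.of_le one_le_two
  have hDgu : ContDiff ℝ 1 fun y => fderiv ℝ gu y v :=
    (hgu.fderiv_right le_rfl).clm_apply contDiff_const
  have hDgv : ContDiff ℝ 1 fun y => fderiv ℝ gv y u :=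
    (hgv.fderiv_right le_rfl).clm_apply contDiff_const
  have hDcu : HasCompactSupport fun y => fderiv ℝ gu y v := hcu.fderiv_apply ℝ v
  have hDcv : HasCompactSupport fun y => fderiv ℝ gv y u := hcv.fderiv_apply ℝ u
  have hDvL₁ : (fun y => fderiv ℝ (vLineTransform id id α u v gu gv) y v) =
      vLineTransform id 1 (-α) u v (fun y => fderiv ℝ gu y v) gv := by
    funext y
    rw [fderiv_vLineTransform_apply continuous_id continuous_id hu hv hgu₁ hcu hgv₁ hcv,
      vLineTransform, vLineTransform, rayTransform_id_fderiv_apply_self hgv₁ hcv hv]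
    ring
  have hDuDvL₁ : fderiv ℝ (vLineTransform id 1 (-α) u v (fun y => fderiv ℝ gu y v) gv) x u =
      rayTransform 1 u (fun y => fderiv ℝ gu y v) x -
        α * rayTransform 1 v (fun y => fderiv ℝ gv y u) x := by
    rw [fderiv_vLineTransform_apply continuous_id continuous_one hu hv hDgu hDcu hgv₁ hcv,
      vLineTransform, rayTransform_id_fderiv_apply_self hDgu hDcu hu]
    ring
  have hDuL : fderiv ℝ (vLineTransform 1 1 α u v gu gv) x u =
      gu x + α * rayTransform 1 v (fun y => fderiv ℝ gv y u) x := by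
    rw [fderiv_vLineTransform_apply continuous_one continuous_one hu hv hgu₁ hcu hgv₁ hcv,
      vLineTransform, rayTransform_one_fderiv_apply_self hgu₁ hcu hu, neg_neg]
  have hDvL : fderiv ℝ (vLineTransform 1 1 α u v gu gv) x v =
      -rayTransform 1 u (fun y => fderiv ℝ gu y v) x - α * gv x := by
    rw [fderiv_vLineTransform_apply continuous_one continuous_one hu hv hgu₁ hcu hgv₁ hcv,
      vLineTransform, rayTransform_one_fderiv_apply_self hgv₁ hcv hv]
    ring
  rw [hDvL₁, hDuDvL₁, hDuL, hDvL]
  ring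

end VLine

theorem Lc_eq_vLineTransform (α : ℝ) (u v : ℝ × ℝ) (f : ℝ × ℝ → ℝ × ℝ) :
    Lc α u v f = vLineTransform 1 1 α u v (fun p => dot u (f p)) (fun p => dot v (f p)) := by
  funext x
  simp [Lc, vLineTransform, rayTransform]

theorem Lc1_eq_vLineTransform (α : ℝ) (u v : ℝ × ℝ) (f : ℝ × ℝ → ℝ × ℝ) :
    Lc1 α u v f = vLineTransform id id α u v (fun p => dot u (f p)) (fun p => dot v (f p)) :=
  rfl

theorem stmt18_general (α u₁ u₂ : ℝ) (hunit : u₁ ^ 2 + u₂ ^ 2 = 1)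
    (f : ℝ × ℝ → ℝ × ℝ) (hf : ContDiff ℝ 2 f)
    (hcs : HasCompactSupport f) :
    ∀ x, Dc (u₁, u₂) (Dc (-u₁, u₂) (Lc1 α (u₁, u₂) (-u₁, u₂) f)) x +
        (Dc (u₁, u₂) (Lc α (u₁, u₂) (-u₁, u₂) f) x +
          Dc (-u₁, u₂) (Lc α (u₁, u₂) (-u₁, u₂) f) x) =
      (1 + α) * u₁ * (f x).1 + (1 - α) * u₂ * (f x).2 := by
  intro x
  have hu : ((u₁, u₂) : ℝ × ℝ) ≠ 0 := fun h => by simp_all [Prod.ext_iff]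
  have hv : ((-u₁, u₂) : ℝ × ℝ) ≠ 0 := fun h => by simp_all [Prod.ext_iff]
  have hdot : ∀ w, ContDiff ℝ 2 fun p => dot w (f p) := fun w => by unfold dot; fun_prop
  have hdot_cs : ∀ w, HasCompactSupport fun p => dot w (f p) := fun w =>
    hcs.comp_left (g := dot w) (by simp [dot])
  unfold Dc
  rw [Lc_eq_vLineTransform, Lc1_eq_vLineTransform,
    vLineTransform_moment_identity hu hv (hdot _) (hdot_cs _) (hdot _) (hdot_cs _)]
  simp only [dot]
  ring

theorem stmt18 (α u₁ u₂ : ℝ) (hunit : u₁ ^ 2 + u₂ ^ 2 = 1) (hne : u₁ * u₂ ≠ 0)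
    (f : ℝ × ℝ → ℝ × ℝ) (hf : ContDiff ℝ 2 f)
    (hcs : HasCompactSupport f) (hsupp : tsupport f ⊆ disc) :
    ∀ x, Dc (u₁, u₂) (Dc (-u₁, u₂) (Lc1 α (u₁, u₂) (-u₁, u₂) f)) x +
        (Dc (u₁, u₂) (Lc α (u₁, u₂) (-u₁, u₂) f) x +
          Dc (-u₁, u₂) (Lc α (u₁, u₂) (-u₁, u₂) f) x) =
      (1 + α) * u₁ * (f x).1 + (1 - α) * u₂ * (f x).2 :=
  stmt18_general α u₁ u₂ hunit f hf hcs
end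
end

section
/- Let u, v : ℝ² → ℝ² be C¹ vector fields with |u(x)| = |v(x)| = 1 for all x, each having straight lines as integral curves. Then for all x ∈ ℝ²: (1) (D_u u)(x) = 0 and (D_u u⊥)(x) = 0; (2) (D⊥_u u)(x) = δu(x)·u⊥(x); and (3) (D_u v)(x) = c⊥_uv(x)·δv(x)·v⊥(x), where D_u and D⊥_u are applied componentwise. -/
open MeasureTheory

noncomputable section

/-- Divergence `δg = ∂g₁/∂x₁ + ∂g₂/∂x₂` of a vector field on `ℝ²`. -/
def dvg (g : ℝ × ℝ → ℝ × ℝ) (x : ℝ × ℝ) : ℝ :=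
  (fderiv ℝ g x (1, 0)).1 + (fderiv ℝ g x (0, 1)).2

/-!
Differentiating `w (x + t • w x) = w x` at `t = 0⁺` gives `Dw (w) = 0`, and differentiating
`dot w w = 1` shows that the image of `Dw` is orthogonal to `w`. In the orthonormal frame
`w, perp w` the matrix of `Dw` therefore has a single nonzero entry,
`dot (perp w) (Dw (perp w))`, which is its trace `dvg w`. Part (3) follows by expanding
`u = dot u v • v + dot u (perp v) • perp v` and applying this to `v`.
-/

theorem fderiv_apply_self_eq_zero_of_lines {E : Type*} [NormedAddCommGroup E] [NormedSpace ℝ E]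
    {w : E → E} {x : E} (hw : DifferentiableAt ℝ w x)
    (hline : ∀ t : ℝ, 0 ≤ t → w (x + t • w x) = w x) :
    fderiv ℝ w x (w x) = 0 := by
  have hray : HasDerivAt (fun t : ℝ => x + t • w x) (w x) 0 := by
    simpa using ((hasDerivAt_id (0 : ℝ)).smul_const (w x)).const_add x
  have hw' : HasFDerivAt w (fderiv ℝ w x) (x + (0 : ℝ) • w x) := by
    simpa using hw.hasFDerivAt
  have hderiv : HasDerivWithinAt (fun t : ℝ => w (x + t • w x)) (fderiv ℝ w x (w x))
      (Set.Ici 0) 0 := (hw'.comp_hasDerivAt 0 hray).hasDerivWithinAt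
  have hconst : HasDerivWithinAt (fun t : ℝ => w (x + t • w x)) 0 (Set.Ici 0) 0 :=
    (hasDerivWithinAt_const 0 _ (w x)).congr hline (by simp)
  exact (uniqueDiffOn_Ici 0 0 Set.self_mem_Ici).eq_deriv _ hderiv hconst

theorem eq_dot_smul_add_dot_perp_smul_s19 {e : ℝ × ℝ} (he : dot e e = 1) (a : ℝ × ℝ) :
    a = dot a e • e + dot a (perp e) • perp e := by
  obtain ⟨a₁, a₂⟩ := a
  obtain ⟨e₁, e₂⟩ := e
  simp only [dot, perp] at he ⊢
  ext <;> simp only [Prod.smul_mk, Prod.mk_add_mk, smul_eq_mul]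
  · linear_combination -a₁ * he
  · linear_combination -a₂ * he

theorem ContinuousLinearMap.apply_mk (A : (ℝ × ℝ) →L[ℝ] ℝ × ℝ) (s t : ℝ) :
    A (s, t) = s • A (1, 0) + t • A (0, 1) := by
  rw [← A.map_smul, ← A.map_smul, ← A.map_add]
  simp

theorem dvg_eq_dot_add_dot_perp (w : ℝ × ℝ → ℝ × ℝ) (x : ℝ × ℝ) {e : ℝ × ℝ}
    (he : dot e e = 1) :
    dvg w x = dot e (fderiv ℝ w x e) + dot (perp e) (fderiv ℝ w x (perp e)) := by
  obtain ⟨e₁, e₂⟩ := e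
  simp only [dvg, dot, perp] at he ⊢
  rw [(fderiv ℝ w x).apply_mk e₁, (fderiv ℝ w x).apply_mk (-e₂)]
  simp only [Prod.fst_add, Prod.snd_add, Prod.smul_fst, Prod.smul_snd, smul_eq_mul]
  linear_combination (-((fderiv ℝ w x (1, 0)).1 + (fderiv ℝ w x (0, 1)).2)) * he

theorem dot_fderiv_eq_zero_of_dot_self_eq_one_s19 {w : ℝ × ℝ → ℝ × ℝ} {x : ℝ × ℝ}
    (hw : DifferentiableAt ℝ w x) (hunit : ∀ y, dot (w y) (w y) = 1) (a : ℝ × ℝ) :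
    dot (w x) (fderiv ℝ w x a) = 0 := by
  have h₁ := hw.hasFDerivAt.fst
  have h₂ := hw.hasFDerivAt.snd
  have hF : HasFDerivAt (fun y => dot (w y) (w y)) _ x := (h₁.mul h₁).add (h₂.mul h₂)
  have hconst : HasFDerivAt (fun y => dot (w y) (w y)) (0 : (ℝ × ℝ) →L[ℝ] ℝ) x := by
    simpa only [hunit] using hasFDerivAt_const (1 : ℝ) x
  have h := congrArg (· a) (hF.unique hconst)
  simp only [add_apply, smul_apply, ContinuousLinearMap.comp_apply,
    ContinuousLinearMap.coe_fst', ContinuousLinearMap.coe_snd', zero_apply, smul_eq_mul] at h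
  simp only [dot]
  linarith

theorem fderiv_perp_comp {w : ℝ × ℝ → ℝ × ℝ} {x : ℝ × ℝ} (hw : DifferentiableAt ℝ w x)
    (a : ℝ × ℝ) : fderiv ℝ (fun y => perp (w y)) x a = perp (fderiv ℝ w x a) := by
  have h : HasFDerivAt (fun y => perp (w y))
      ((-(ContinuousLinearMap.snd ℝ ℝ ℝ).comp (fderiv ℝ w x)).prod
        ((ContinuousLinearMap.fst ℝ ℝ ℝ).comp (fderiv ℝ w x))) x :=
    hw.hasFDerivAt.snd.neg.prodMk hw.hasFDerivAt.fst
  rw [h.fderiv]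
  rfl

theorem fderiv_apply_perp_eq_dvg_smul {w : ℝ × ℝ → ℝ × ℝ} {x : ℝ × ℝ} (hw : DifferentiableAt ℝ w x)
    (hunit : ∀ y, dot (w y) (w y) = 1) (hline : ∀ t : ℝ, 0 ≤ t → w (x + t • w x) = w x) :
    fderiv ℝ w x (perp (w x)) = dvg w x • perp (w x) := by
  have hself := fderiv_apply_self_eq_zero_of_lines hw hline
  have horth := dot_fderiv_eq_zero_of_dot_self_eq_one_s19 hw hunit (perp (w x))
  rw [eq_dot_smul_add_dot_perp_smul_s19 (hunit x) (fderiv ℝ w x (perp (w x))),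
    dvg_eq_dot_add_dot_perp w x (hunit x), hself]
  simp only [dot] at horth ⊢
  simp [horth, mul_comm]

theorem stmt19
    (u v : ℝ × ℝ → ℝ × ℝ) (hu : ContDiff ℝ 1 u) (hv : ContDiff ℝ 1 v)
    (hunitu : ∀ x, dot (u x) (u x) = 1) (hunitv : ∀ x, dot (v x) (v x) = 1)
    (hlineu : ∀ (x : ℝ × ℝ) (t : ℝ), 0 ≤ t → u (x + t • u x) = u x)
    (hlinev : ∀ (x : ℝ × ℝ) (t : ℝ), 0 ≤ t → v (x + t • v x) = v x) :
    ∀ x : ℝ × ℝ,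
      (fderiv ℝ u x (u x) = 0 ∧ fderiv ℝ (fun y => perp (u y)) x (u x) = 0) ∧
      fderiv ℝ u x (perp (u x)) = dvg u x • perp (u x) ∧
      fderiv ℝ v x (u x) = (dot (u x) (perp (v x)) * dvg v x) • perp (v x) := by
  intro x
  have hux : DifferentiableAt ℝ u x := hu.differentiable one_ne_zero x
  have hvx : DifferentiableAt ℝ v x := hv.differentiable one_ne_zero x
  have huu : fderiv ℝ u x (u x) = 0 := fderiv_apply_self_eq_zero_of_lines hux (hlineu x)
  refine ⟨⟨huu, by rw [fderiv_perp_comp hux, huu]; simp [perp]⟩,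
    fderiv_apply_perp_eq_dvg_smul hux hunitu (hlineu x), ?_⟩
  conv_lhs => rw [eq_dot_smul_add_dot_perp_smul_s19 (hunitv x) (u x)]
  rw [map_add, map_smul, map_smul,
    fderiv_apply_self_eq_zero_of_lines hvx (hlinev x),
    fderiv_apply_perp_eq_dvg_smul hvx hunitv (hlinev x), smul_zero, zero_add, smul_smul]
end
end
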